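/- arXiv:2203.16837 — 7 statements merged into one kernel-verified Lean document; each statement's English description precedes it below -/
import Mathlib

section
/- Fix a natural number m ≥ 2. Then: (1) for every natural number r with 2r ≤ m and (r : ℝ) ≤ r₁₁(m), one has h₁(m,r) ≤ h₁(m,r+1); (2) for every natural number r with 2(r+1) ≤ m and (r : ℝ) ≥ r₁₁(m), one has h₁(m,r+1) ≤ h₁(m,r); (3) consequently, for every natural number r with 2r ≤ m, h₁(m,r) ≤ max( h₁(m, ⌊r₁₁(m)⌋₊), h₁(m, ⌈r₁₁(m)⌉₊) ), where ⌊·⌋₊ and ⌈·⌉₊ denote the floor and ceiling of a real number truncated to a natural number. -/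
/-- `h₁(m,r) := choose(m−r, r)` (natural-number subtraction). -/
def h₁ (m r : ℕ) : ℕ := Nat.choose (m - r) r

/-- `r₁₁(m) := (5m−3−√(5m²+10m+9))/10`. -/
noncomputable def r₁₁ (m : ℕ) : ℝ :=
  (5 * (m : ℝ) - 3 - Real.sqrt (5 * (m : ℝ) ^ 2 + 10 * (m : ℝ) + 9)) / 10

private lemma chid (m r : ℕ) (h : 2*r+2 ≤ m) :
    Nat.choose (m-r-1) (r+1) * ((r+1)*(m-r)) =
    Nat.choose (m-r) r * ((m-2*r)*(m-2*r-1)) := by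
  obtain ⟨n, hn⟩ : ∃ n, m - r = n + 1 := ⟨m - r - 1, by omega⟩
  have e1 := Nat.choose_succ_right_eq (m-r) r
  have e2 := Nat.choose_mul_succ_eq n (r+1)
  have h3 : n + 1 - (r+1) = m - 2*r - 1 := by omega
  have h4 : m - r - r = m - 2*r := by omega
  have h5 : m - r - 1 = n := by omega
  rw [h3] at e2
  rw [h4, hn] at e1
  rw [h5, hn]
  calc Nat.choose n (r+1) * ((r+1)*(n+1))
      = (Nat.choose n (r+1) * (n+1)) * (r+1) := by ring
    _ = (Nat.choose (n+1) (r+1) * (m-2*r-1)) * (r+1) := by rw [e2]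
    _ = (Nat.choose (n+1) (r+1) * (r+1)) * (m-2*r-1) := by ring
    _ = (Nat.choose (n+1) r * (m - 2*r)) * (m-2*r-1) := by rw [e1]
    _ = Nat.choose (n+1) r * ((m-2*r)*(m-2*r-1)) := by ring

private lemma key1 (m r : ℕ) (hm : 2 ≤ m) (h2 : 2*r ≤ m) (hr : (r:ℝ) ≤ r₁₁ m) :
    2*r+2 ≤ m ∧ (r+1)*(m-r) ≤ (m-2*r)*(m-2*r-1) := by
  have hD0 : 0 ≤ Real.sqrt (5*(m:ℝ)^2+10*m+9) := Real.sqrt_nonneg _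
  have hD2 : Real.sqrt (5*(m:ℝ)^2+10*m+9) ^ 2 = 5*(m:ℝ)^2+10*m+9 :=
    Real.sq_sqrt (by positivity)
  have hr' : Real.sqrt (5*(m:ℝ)^2+10*m+9) ≤ 5*(m:ℝ) - 3 - 10*r := by
    unfold r₁₁ at hr; linarith
  have hsq : 5*(m:ℝ)^2+10*m+9 ≤ (5*(m:ℝ)-3-10*r)^2 := by
    nlinarith [hD0, hD2, hr']
  have hm' : (2:ℝ) ≤ m := by exact_mod_cast hm
  have hmr : 2*(r:ℝ) ≤ m := by exact_mod_cast h2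
  have hreal : ((r:ℝ)+1)*((m:ℝ)-r) ≤ ((m:ℝ)-2*r)*((m:ℝ)-2*r-1) := by nlinarith
  have hlt : 2*r+2 ≤ m := by
    by_contra hc
    push_neg at hc
    have hcast : (m:ℝ) ≤ 2*(r:ℝ)+1 := by exact_mod_cast Nat.lt_succ_iff.mp hc
    nlinarith
  refine ⟨hlt, ?_⟩
  zify [show r ≤ m by omega, h2, show 1 ≤ m - 2*r by omega]
  exact_mod_cast hreal

private lemma key2 (m r : ℕ) (h2 : 2*(r+1) ≤ m) (hr : r₁₁ m ≤ (r:ℝ)) :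
    (m-2*r)*(m-2*r-1) ≤ (r+1)*(m-r) := by
  have hD0 : 0 ≤ Real.sqrt (5*(m:ℝ)^2+10*m+9) := Real.sqrt_nonneg _
  have hD2 : Real.sqrt (5*(m:ℝ)^2+10*m+9) ^ 2 = 5*(m:ℝ)^2+10*m+9 :=
    Real.sq_sqrt (by positivity)
  have hr' : 5*(m:ℝ) - 3 - 10*r ≤ Real.sqrt (5*(m:ℝ)^2+10*m+9) := by
    unfold r₁₁ at hr; linarith
  have hmr : 2*((r:ℝ)+1) ≤ m := by exact_mod_cast h2
  have hr'' : -Real.sqrt (5*(m:ℝ)^2+10*m+9) ≤ 5*(m:ℝ) - 3 - 10*r := by linarith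
  have hsq : (5*(m:ℝ)-3-10*r)^2 ≤ (Real.sqrt (5*(m:ℝ)^2+10*m+9))^2 :=
    sq_le_sq' hr'' hr'
  rw [hD2] at hsq
  have hreal : ((m:ℝ)-2*r)*((m:ℝ)-2*r-1) ≤ ((r:ℝ)+1)*((m:ℝ)-r) := by nlinarith
  zify [show r ≤ m by omega, show 2*r ≤ m by omega, show 1 ≤ m - 2*r by omega]
  exact_mod_cast hreal

private lemma step_up (m r : ℕ) (hm : 2 ≤ m) (h2 : 2*r ≤ m) (hr : (r:ℝ) ≤ r₁₁ m) :
    h₁ m r ≤ h₁ m (r+1) := by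
  obtain ⟨hlt, hkey⟩ := key1 m r hm h2 hr
  have hid := chid m r hlt
  have hX : 0 < (r+1)*(m-r) := by
    have : 0 < m - r := by omega
    positivity
  have hmain : h₁ m r * ((r+1)*(m-r)) ≤ h₁ m (r+1) * ((r+1)*(m-r)) := by
    unfold h₁
    rw [show m - (r+1) = m - r - 1 by omega, hid]
    exact Nat.mul_le_mul_left _ hkey
  exact Nat.le_of_mul_le_mul_right hmain hX

private lemma step_down (m r : ℕ) (h2 : 2*(r+1) ≤ m) (hr : r₁₁ m ≤ (r:ℝ)) :
    h₁ m (r+1) ≤ h₁ m r := by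
  have hkey := key2 m r h2 hr
  have hid := chid m r (by omega)
  have hX : 0 < (r+1)*(m-r) := by
    have : 0 < m - r := by omega
    positivity
  have hmain : h₁ m (r+1) * ((r+1)*(m-r)) ≤ h₁ m r * ((r+1)*(m-r)) := by
    unfold h₁
    rw [show m - (r+1) = m - r - 1 by omega, hid]
    exact Nat.mul_le_mul_left _ hkey
  exact Nat.le_of_mul_le_mul_right hmain hX

private lemma r₁₁_nonneg (m : ℕ) (hm : 2 ≤ m) : 0 ≤ r₁₁ m := by
  have hm' : (2:ℝ) ≤ m := by exact_mod_cast hm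
  have h1 : Real.sqrt (5*(m:ℝ)^2+10*m+9) ≤ Real.sqrt ((5*(m:ℝ)-3)^2) :=
    Real.sqrt_le_sqrt (by nlinarith)
  rw [Real.sqrt_sq (by linarith)] at h1
  unfold r₁₁
  linarith

private lemma half (m j : ℕ) (hj : (j:ℝ) ≤ r₁₁ m) : 2*j ≤ m := by
  have h9 : (3:ℝ) ≤ Real.sqrt (5*(m:ℝ)^2+10*m+9) := by
    have hm0 : (0:ℝ) ≤ m := Nat.cast_nonneg m
    have := Real.sqrt_le_sqrt (show (3:ℝ)^2 ≤ 5*(m:ℝ)^2+10*m+9 by nlinarith)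
    rwa [Real.sqrt_sq (by norm_num)] at this
  unfold r₁₁ at hj
  have : 2*(j:ℝ) ≤ m := by linarith
  exact_mod_cast this

private lemma up (m : ℕ) (hm : 2 ≤ m) :
    ∀ k, k ≤ ⌊r₁₁ m⌋₊ → ∀ j, j ≤ k → h₁ m j ≤ h₁ m k := by
  intro k
  induction k with
  | zero =>
    intro _ j hj
    rw [Nat.le_zero.mp hj]
  | succ k ih =>
    intro hk j hj
    rcases Nat.lt_or_ge j (k+1) with h | h
    · have hj' : j ≤ k := by omega
      have hk' : k ≤ ⌊r₁₁ m⌋₊ := by omega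
      refine le_trans (ih hk' j hj') ?_
      have hkr : (k:ℝ) ≤ r₁₁ m := by
        calc (k:ℝ) ≤ (⌊r₁₁ m⌋₊ : ℝ) := by exact_mod_cast hk'
          _ ≤ r₁₁ m := Nat.floor_le (r₁₁_nonneg m hm)
      exact step_up m k hm (half m k hkr) hkr
    · have : j = k+1 := by omega
      subst this; exact le_rfl

private lemma down (m : ℕ) :
    ∀ k, ⌈r₁₁ m⌉₊ ≤ k → 2*k ≤ m → h₁ m k ≤ h₁ m ⌈r₁₁ m⌉₊ := by
  intro k
  induction k with
  | zero =>
    intro h _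
    rw [Nat.le_zero.mp h]
  | succ k ih =>
    intro h h2
    rcases Nat.lt_or_ge k ⌈r₁₁ m⌉₊ with hc | hc
    · have : ⌈r₁₁ m⌉₊ = k+1 := by omega
      rw [this]
    · have hr : r₁₁ m ≤ (k:ℝ) := by
        have := Nat.ceil_le.mp (le_refl ⌈r₁₁ m⌉₊)
        calc r₁₁ m ≤ (⌈r₁₁ m⌉₊ : ℝ) := Nat.le_ceil _
          _ ≤ (k:ℝ) := by exact_mod_cast hc
      refine le_trans (step_down m k (by omega) hr) (ih hc (by omega))

theorem h₁_monotonicity_and_max (m : ℕ) (hm : 2 ≤ m) :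
    (∀ r : ℕ, 2 * r ≤ m → (r : ℝ) ≤ r₁₁ m → h₁ m r ≤ h₁ m (r + 1)) ∧
    (∀ r : ℕ, 2 * (r + 1) ≤ m → r₁₁ m ≤ (r : ℝ) → h₁ m (r + 1) ≤ h₁ m r) ∧
    (∀ r : ℕ, 2 * r ≤ m →
      h₁ m r ≤ max (h₁ m ⌊r₁₁ m⌋₊) (h₁ m ⌈r₁₁ m⌉₊)) := by
  refine ⟨fun r h2 hr => step_up m r hm h2 hr,
          fun r h2 hr => step_down m r h2 hr,
          fun r h2 => ?_⟩
  rcases le_or_gt r ⌊r₁₁ m⌋₊ with h | h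
  · exact le_max_of_le_left (up m hm _ le_rfl r h)
  · have hceil : ⌈r₁₁ m⌉₊ ≤ r :=
      le_trans (Nat.ceil_le_floor_add_one _) (by omega)
    exact le_max_of_le_right (down m r hceil h2)
end

section
/- Suppose c : [0,1] → ℝⁿ is continuous and ε₀ ∈ [0,1]. If there exists a sequence εₖ ∈ [0,1] with εₖ → ε₀ and F(εₖ) ≠ F(ε₀) for all k, then the set F(ε₀) of optimal vertices at ε₀ contains at least two elements. -/
open Filter

theorem switching_time_two_optimal_vertices
    (n : ℕ) (hn : 1 ≤ n)
    (V : Finset (Fin n → ℝ)) (hV : V.Nonempty)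
    (c : ℝ → (Fin n → ℝ)) (hc : ContinuousOn c (Set.Icc 0 1))
    (h : (Fin n → ℝ) → ℝ → ℝ)
    (hh : ∀ v ε, h v ε = ∑ i, c ε i * v i)
    (val : ℝ → ℝ) (hval : ∀ ε, val ε = V.inf' hV (fun v => h v ε))
    (F : ℝ → Set (Fin n → ℝ))
    (hF : ∀ ε, F ε = {v | v ∈ V ∧ h v ε = val ε})
    (ε₀ : ℝ) (hε₀ : ε₀ ∈ Set.Icc (0 : ℝ) 1)
    (e : ℕ → ℝ) (he : ∀ k, e k ∈ Set.Icc (0 : ℝ) 1)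
    (hlim : Tendsto e atTop (nhds ε₀))
    (hne : ∀ k, F (e k) ≠ F ε₀) :
    ∃ a ∈ F ε₀, ∃ b ∈ F ε₀, a ≠ b := by
  -- a: optimal vertex at ε₀
  obtain ⟨a, haV, ha⟩ := V.exists_mem_eq_inf' hV (fun v => h v ε₀)
  have haF : a ∈ F ε₀ := by
    rw [hF]; exact ⟨haV, by rw [hval]; exact ha.symm⟩
  by_contra hcon
  push_neg at hcon
  have huniq : ∀ v ∈ F ε₀, v = a := fun v hv => hcon v hv a haF
  -- strict inequality at ε₀ for all v ≠ a
  have hstrict : ∀ v ∈ V, v ≠ a → h a ε₀ < h v ε₀ := by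
    intro v hvV hva
    have hle : h a ε₀ ≤ h v ε₀ := ha ▸ V.inf'_le _ hvV
    rcases lt_or_eq_of_le hle with hlt | heq
    · exact hlt
    · exfalso
      apply hva
      apply huniq
      rw [hF]
      exact ⟨hvV, by rw [hval, ← heq, ha]⟩
  -- continuity of h v on Icc
  have hcont : ∀ v : Fin n → ℝ, ContinuousOn (fun ε => h v ε) (Set.Icc 0 1) := by
    intro v
    have : ContinuousOn (fun ε => ∑ i, c ε i * v i) (Set.Icc (0:ℝ) 1) := by
      apply continuousOn_finset_sum
      intro i _
      exact (((continuous_apply i).comp_continuousOn hc)).mul continuousOn_const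
    simpa only [hh] using this
  -- e tends to ε₀ within Icc
  have hlim' : Tendsto e atTop (nhdsWithin ε₀ (Set.Icc 0 1)) :=
    tendsto_nhdsWithin_iff.2 ⟨hlim, Eventually.of_forall he⟩
  -- eventually h a (e k) < h v (e k) for all v ∈ V, v ≠ a
  have hev : ∀ᶠ k in atTop, ∀ v ∈ V, v ≠ a → h a (e k) < h v (e k) := by
    rw [V.eventually_all]
    intro v hvV
    by_cases hva : v = a
    · exact Eventually.of_forall (fun k hv => absurd hva hv)
    · have htv : Tendsto (fun k => h v (e k) - h a (e k)) atTop
          (nhds (h v ε₀ - h a ε₀)) := by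
        exact (((hcont v).continuousWithinAt hε₀).tendsto.comp hlim').sub
          (((hcont a).continuousWithinAt hε₀).tendsto.comp hlim')
      have hpos : (0:ℝ) < h v ε₀ - h a ε₀ := sub_pos.2 (hstrict v hvV hva)
      filter_upwards [htv.eventually_const_lt hpos] with k hk _
      linarith
  obtain ⟨k, hk⟩ := hev.exists
  apply hne k
  -- h a (e k) is the min
  have hmin : val (e k) = h a (e k) := by
    rw [hval]
    apply le_antisymm (V.inf'_le _ haV)
    apply Finset.le_inf'
    intro v hvV
    by_cases hva : v = a
    · rw [hva]
    · exact (hk v hvV hva).le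
  -- F (e k) = F ε₀ = {a}
  have h1 : F (e k) = {a} := by
    rw [hF]
    ext v
    simp only [Set.mem_setOf_eq, Set.mem_singleton_iff]
    constructor
    · rintro ⟨hvV, hveq⟩
      by_contra hva
      exact absurd hveq (by rw [hmin]; exact (hk v hvV hva).ne')
    · rintro rfl
      exact ⟨haV, hmin.symm⟩
  have h2 : F ε₀ = {a} := by
    apply Set.eq_singleton_iff_unique_mem.2 ⟨haF, huniq⟩
  rw [h1, h2]
end

section
/- Suppose each coordinate of c : ℝ → ℝⁿ is real-analytic on an open set containing (0,1). Call ε₀ ∈ (0,1) a switching time if there exists a sequence εₖ ∈ (0,1) with εₖ → ε₀ and F(εₖ) ≠ F(ε₀) for all k. Then for every δ with 0 < δ < 1/2, the set of switching times contained in [δ, 1−δ] is finite. -/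
open Filter

theorem finitely_many_switching_times
    (n : ℕ) (hn : 1 ≤ n)
    (V : Finset (Fin n → ℝ)) (hV : V.Nonempty)
    (c : ℝ → (Fin n → ℝ))
    (hc : ∃ U : Set ℝ, IsOpen U ∧ Set.Ioo (0 : ℝ) 1 ⊆ U ∧
      ∀ i, AnalyticOnNhd ℝ (fun ε => c ε i) U)
    (h : (Fin n → ℝ) → ℝ → ℝ)
    (hh : ∀ v ε, h v ε = ∑ i, c ε i * v i)
    (val : ℝ → ℝ) (hval : ∀ ε, val ε = V.inf' hV (fun v => h v ε))
    (F : ℝ → Set (Fin n → ℝ))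
    (hF : ∀ ε, F ε = {v | v ∈ V ∧ h v ε = val ε})
    (Switch : ℝ → Prop)
    (hSwitch : ∀ ε₀, Switch ε₀ ↔ (ε₀ ∈ Set.Ioo (0 : ℝ) 1 ∧
      ∃ e : ℕ → ℝ, (∀ k, e k ∈ Set.Ioo (0 : ℝ) 1) ∧
        Tendsto e atTop (nhds ε₀) ∧ ∀ k, F (e k) ≠ F ε₀))
    (δ : ℝ) (hδ : 0 < δ) (hδ' : δ < 1 / 2) :
    {ε : ℝ | Switch ε ∧ ε ∈ Set.Icc δ (1 - δ)}.Finite := by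
  obtain ⟨U, hUopen, hUsub, hcU⟩ := hc
  -- each h v is analytic on (0,1)
  have hanal : ∀ v : Fin n → ℝ, AnalyticOnNhd ℝ (h v) (Set.Ioo (0:ℝ) 1) := by
    intro v x hx
    have heq : h v = fun ε => ∑ i, c ε i * v i := funext fun ε => hh v ε
    rw [heq]
    exact Finset.analyticAt_fun_sum _ fun i _ => (hcU i x (hUsub hx)).mul analyticAt_const
  have hIccsub : Set.Icc δ (1 - δ) ⊆ Set.Ioo (0:ℝ) 1 := by
    intro x hx
    exact ⟨by linarith [hx.1], by linarith [hx.2]⟩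
  -- the "bad" sets
  set S : (Fin n → ℝ) × (Fin n → ℝ) → Set ℝ := fun p =>
    {ε | ε ∈ Set.Icc δ (1 - δ) ∧ h p.1 ε = h p.2 ε ∧
      ¬ Set.EqOn (h p.1) (h p.2) (Set.Ioo (0:ℝ) 1)} with hS
  have hSfin : ∀ p, (S p).Finite := by
    intro p
    by_contra hinf
    replace hinf : (S p).Infinite := hinf
    obtain ⟨x, hxK, hacc⟩ := hinf.exists_accPt_of_subset_isCompact isCompact_Icc
      (fun ε hε => hε.1)
    have hg : AnalyticOnNhd ℝ (fun ε => h p.1 ε - h p.2 ε) (Set.Ioo (0:ℝ) 1) :=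
      (hanal p.1).sub (hanal p.2)
    have hfreq : ∃ᶠ z in nhdsWithin x {x}ᶜ, h p.1 z - h p.2 z = 0 := by
      rw [accPt_iff_frequently] at hacc
      rw [frequently_nhdsWithin_iff]
      exact hacc.mono fun z hz => ⟨sub_eq_zero_of_eq hz.2.2.1, hz.1⟩
    have hz : Set.EqOn (fun ε => h p.1 ε - h p.2 ε) 0 (Set.Ioo (0:ℝ) 1) :=
      hg.eqOn_zero_of_preconnected_of_frequently_eq_zero isPreconnected_Ioo
        (hIccsub hxK) hfreq
    obtain ⟨ε, hε⟩ := hinf.nonempty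
    exact hε.2.2 fun y hy => sub_eq_zero.mp (hz hy)
  refine Set.Finite.subset (((V ×ˢ V).finite_toSet.biUnion fun p _ => hSfin p)) ?_
  rintro ε₀ ⟨hSw, hIcc⟩
  rw [hSwitch] at hSw
  obtain ⟨hmem, e, he01, hetend, heF⟩ := hSw
  by_contra hnot
  simp only [Set.mem_iUnion, exists_prop, not_exists, not_and] at hnot
  -- so: whenever two vertices tie at ε₀, they agree on all of (0,1)
  have hkey : ∀ v ∈ V, ∀ w ∈ V, h v ε₀ = h w ε₀ →
      Set.EqOn (h v) (h w) (Set.Ioo (0:ℝ) 1) := by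
    intro v hv w hw hvw
    by_contra hne
    exact hnot (v, w) (Finset.mem_coe.2 (Finset.mem_product.2 ⟨hv, hw⟩))
      ⟨hIcc, hvw, hne⟩
  obtain ⟨v₀, hv₀V, hv₀⟩ := V.exists_mem_eq_inf' hV (fun v => h v ε₀)
  have hval₀ : val ε₀ = h v₀ ε₀ := by rw [hval]; exact hv₀
  -- eventually all non-optimal vertices stay strictly above h v₀
  have hev : ∀ᶠ ε in nhds ε₀, ∀ w ∈ V, h w ε₀ ≠ val ε₀ → h v₀ ε < h w ε := by
    rw [eventually_all_finset]
    intro w hw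
    by_cases hcase : h w ε₀ = val ε₀
    · exact Eventually.of_forall fun ε hc => absurd hcase hc
    · have hlt : h v₀ ε₀ < h w ε₀ := by
        rcases lt_or_eq_of_le (by rw [hval]; exact Finset.inf'_le _ hw : val ε₀ ≤ h w ε₀) with
          hlt | heq
        · rw [← hval₀]; exact hlt
        · exact absurd heq.symm hcase
      have := ContinuousAt.eventually_lt ((hanal v₀ ε₀ hmem).continuousAt)
        ((hanal w ε₀ hmem).continuousAt) hlt
      exact this.mono fun ε hε _ => hε
  have hev' : ∀ᶠ ε in nhds ε₀, ε ∈ Set.Ioo (0:ℝ) 1 → F ε = F ε₀ := by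
    filter_upwards [hev] with ε hε hε01
    -- val ε = h v₀ ε
    have hvale : val ε = h v₀ ε := by
      rw [hval]
      refine le_antisymm (Finset.inf'_le _ hv₀V) (Finset.le_inf' _ _ fun w hw => ?_)
      by_cases hcase : h w ε₀ = val ε₀
      · have : Set.EqOn (h w) (h v₀) (Set.Ioo (0:ℝ) 1) :=
          hkey w hw v₀ hv₀V (by rw [hcase, hval₀])
        rw [this hε01]
      · exact (hε w hw hcase).le
    ext v
    rw [hF, hF]
    simp only [Set.mem_setOf_eq]
    constructor
    · rintro ⟨hvV, hveq⟩
      refine ⟨hvV, ?_⟩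
      by_contra hcase
      exact absurd hveq (by rw [hvale]; exact (hε v hvV hcase).ne')
    · rintro ⟨hvV, hveq⟩
      refine ⟨hvV, ?_⟩
      have : Set.EqOn (h v) (h v₀) (Set.Ioo (0:ℝ) 1) :=
        hkey v hvV v₀ hv₀V (by rw [hveq, hval₀])
      rw [this hε01, hvale]
  have : ∀ᶠ k in atTop, F (e k) = F ε₀ := by
    filter_upwards [hetend.eventually hev'] with k hk
    exact hk (he01 k)
  obtain ⟨k, hk⟩ := this.exists
  exact heF k hk
end

section
/- Suppose each coordinate of c : ℝ → ℝⁿ is real-analytic on an open set containing (0,1). Then the optimal value function val is locally Lipschitz on (0,1); moreover, for every closed interval [a,b] ⊂ (0,1) there exist finitely many points a = t₀ ≤ t₁ ≤ ⋯ ≤ t_k = b and vertices v₁, …, v_k ∈ V such that val(ε) = h_{v_i}(ε) for all ε ∈ [t_{i−1}, t_i] and each i; in particular val is piecewise analytic on (0,1), with pieces among the analytic functions h_v. -/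
/-!
Each `h v` is analytic, hence locally Lipschitz, and a minimum of finitely many functions that are
Lipschitz with a common constant is Lipschitz with that constant.

For the pieces: by the identity theorem, two analytic functions either agree on a neighbourhood of
`x` or differ at every point of a punctured one. Hence on a short one-sided interval `(x, q)` no two
`h v` cross (intermediate value theorem), so a vertex that is optimal at one point of it is optimal
on all of `[x, q]`. A supremum argument over `[a, b]` glues these one-sided pieces into a finite
subdivision.
-/

open Filter Set Topology

section Lipschitz

variable {α ι : Type*} [PseudoMetricSpace α]

theorem LipschitzOnWith.finset_inf' {V : Finset ι} (hV : V.Nonempty) {F : ι → α → ℝ} {K : NNReal}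
    {s : Set α} (hF : ∀ v ∈ V, LipschitzOnWith K (F v) s) :
    LipschitzOnWith K (fun x => V.inf' hV (F · x)) s := by
  refine LipschitzOnWith.of_le_add_mul K fun x hx y hy => ?_
  obtain ⟨v, hv, hvy⟩ := V.exists_mem_eq_inf' hV (F · y)
  calc V.inf' hV (F · x) ≤ F v x := V.inf'_le _ hv
    _ ≤ F v y + K * dist x y := (hF v hv).le_add_mul hx hy
    _ = V.inf' hV (F · y) + K * dist x y := by rw [hvy]

theorem exists_lipschitzOnWith_finset_inf' {V : Finset ι} (hV : V.Nonempty) {F : ι → α → ℝ}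
    {l : Filter α} (hF : ∀ v ∈ V, ∃ K, ∃ s ∈ l, LipschitzOnWith K (F v) s) :
    ∃ K, ∃ s ∈ l, LipschitzOnWith K (fun x => V.inf' hV (F · x)) s := by
  choose! K s hsl hK using hF
  refine ⟨V.sup K, ⋂ v ∈ V, s v, (biInter_finset_mem V).2 hsl, ?_⟩
  exact LipschitzOnWith.finset_inf' hV fun v hv =>
    ((hK v hv).weaken (V.le_sup hv)).mono (biInter_subset_of_mem hv)

end Lipschitz

section Minimizer

variable {α β ι : Type*} [TopologicalSpace α] [LinearOrder β] [TopologicalSpace β]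
  [OrderClosedTopology β]

theorem IsPreconnected.le_on_closure_of_eqOn_or_forall_ne {s : Set α} (hs : IsPreconnected s)
    {f g : α → β} (hf : ContinuousOn f (closure s)) (hg : ContinuousOn g (closure s))
    (hfg : EqOn f g s ∨ ∀ x ∈ s, f x ≠ g x) {m : α} (hm : m ∈ s) (hfgm : f m ≤ g m) :
    ∀ x ∈ closure s, f x ≤ g x := by
  refine le_on_closure (fun x hx => ?_) hf hg
  by_contra! hlt
  obtain ⟨y, hy, hfgy⟩ := hs.intermediate_value₂ hm hx (hf.mono subset_closure)
    (hg.mono subset_closure) hfgm hlt.le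
  rcases hfg with heq | hne
  · exact hlt.ne (heq hx).symm
  · exact hne y hy hfgy

theorem IsPreconnected.exists_forall_inf'_eq {s : Set α} (hs : IsPreconnected s)
    (hs₀ : s.Nonempty) {V : Finset ι} (hV : V.Nonempty) {F : ι → α → β}
    (hF : ∀ v ∈ V, ContinuousOn (F v) (closure s))
    (hVs : ∀ v ∈ V, ∀ w ∈ V, EqOn (F v) (F w) s ∨ ∀ x ∈ s, F v x ≠ F w x) :
    ∃ v ∈ V, ∀ x ∈ closure s, V.inf' hV (F · x) = F v x := by
  obtain ⟨m, hm⟩ := hs₀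
  obtain ⟨v, hv, hvm⟩ := V.exists_min_image (F · m) hV
  refine ⟨v, hv, fun x hx => le_antisymm (V.inf'_le _ hv) (V.le_inf' hV _ fun w hw => ?_)⟩
  exact hs.le_on_closure_of_eqOn_or_forall_ne (hF v hv) (hF w hw) (hVs v hv w hw) hm
    (hvm w hw) x hx

end Minimizer

section Analytic

variable {𝕜 E ι : Type*} [NontriviallyNormedField 𝕜] [NormedAddCommGroup E] [NormedSpace 𝕜 E]
  {V : Finset ι} {F : ι → 𝕜 → E} {x : 𝕜}

theorem eventually_smallSets_nhdsNE_eqOn_or_forall_ne (hF : ∀ v ∈ V, AnalyticAt 𝕜 (F v) x) :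
    ∀ᶠ s in (𝓝[≠] x).smallSets,
      ∀ v ∈ V, ∀ w ∈ V, EqOn (F v) (F w) s ∨ ∀ y ∈ s, F v y ≠ F w y := by
  simp only [eventually_all_finset]
  intro v hv w hw
  rcases (hF v hv).eventually_eq_or_eventually_ne (hF w hw) with heq | hne
  · exact (eventually_smallSets_forall.2 (heq.filter_mono nhdsWithin_le_nhds)).mono
      fun s hs => Or.inl hs
  · exact (eventually_smallSets_forall.2 hne).mono fun s hs => Or.inr hs

theorem eventually_smallSets_nhds_continuousOn [CompleteSpace E]
    (hF : ∀ v ∈ V, AnalyticAt 𝕜 (F v) x) :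
    ∀ᶠ s in (𝓝 x).smallSets, ∀ v ∈ V, ContinuousOn (F v) s := by
  simp only [eventually_all_finset]
  intro v hv
  exact (eventually_smallSets_forall.2 (hF v hv).eventually_analyticAt).mono
    fun s hs y hy => (hs y hy).continuousAt.continuousWithinAt

end Analytic

section Real

variable {ι : Type*} {V : Finset ι} (hV : V.Nonempty) {F : ι → ℝ → ℝ} {x : ℝ}

theorem eventually_nhdsGT_exists_forall_Icc_inf'_eq (hF : ∀ v ∈ V, AnalyticAt ℝ (F v) x) :
    ∀ᶠ q in 𝓝[>] x, ∃ v ∈ V, ∀ ε ∈ Icc x q, V.inf' hV (F · ε) = F v ε := by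
  have hx : Tendsto (fun _ => x) (𝓝[>] x) (𝓝[≥] x) := tendsto_const_nhdsWithin self_mem_Ici
  have hIoo : Tendsto (Ioo x) (𝓝[>] x) (𝓝[≠] x).smallSets :=
    (hx.Ioo (tendsto_id'.2 (nhdsWithin_mono _ Ioi_subset_Ici_self))).mono_right
      (monotone_smallSets (nhdsWithin_mono _ fun _ h => ne_of_gt h))
  have hIcc : Tendsto (Icc x) (𝓝[>] x) (𝓝 x).smallSets :=
    tendsto_const_nhds.Icc (tendsto_id'.2 nhdsWithin_le_nhds)
  filter_upwards [hIoo.eventually (eventually_smallSets_nhdsNE_eqOn_or_forall_ne hF),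
    hIcc.eventually (eventually_smallSets_nhds_continuousOn hF), self_mem_nhdsWithin]
    with q hpat hcont hxq
  rw [← closure_Ioo (ne_of_lt hxq)] at hcont ⊢
  exact isPreconnected_Ioo.exists_forall_inf'_eq (nonempty_Ioo.2 hxq) hV hcont hpat

theorem eventually_nhdsLT_exists_forall_Icc_inf'_eq (hF : ∀ v ∈ V, AnalyticAt ℝ (F v) x) :
    ∀ᶠ p in 𝓝[<] x, ∃ v ∈ V, ∀ ε ∈ Icc p x, V.inf' hV (F · ε) = F v ε := by
  have hx : Tendsto (fun _ => x) (𝓝[<] x) (𝓝[≤] x) := tendsto_const_nhdsWithin self_mem_Iic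
  have hIoo : Tendsto (Ioo · x) (𝓝[<] x) (𝓝[≠] x).smallSets :=
    ((tendsto_id'.2 (nhdsWithin_mono _ Iio_subset_Iic_self)).Ioo hx).mono_right
      (monotone_smallSets (nhdsWithin_mono _ fun _ h => ne_of_lt h))
  have hIcc : Tendsto (Icc · x) (𝓝[<] x) (𝓝 x).smallSets :=
    (tendsto_id'.2 nhdsWithin_le_nhds).Icc tendsto_const_nhds
  filter_upwards [hIoo.eventually (eventually_smallSets_nhdsNE_eqOn_or_forall_ne hF),
    hIcc.eventually (eventually_smallSets_nhds_continuousOn hF), self_mem_nhdsWithin]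
    with p hpat hcont hpx
  rw [← closure_Ioo (ne_of_lt hpx)] at hcont ⊢
  exact isPreconnected_Ioo.exists_forall_inf'_eq (nonempty_Ioo.2 hpx) hV hcont hpat

end Real

section Subdivision

variable {α : Type*}

def HasSubdivision [Preorder α] (R : α → α → Prop) (a b : α) : Prop :=
  ∃ (k : ℕ) (t : Fin (k + 1) → α), t 0 = a ∧ t (Fin.last k) = b ∧ Monotone t ∧
    ∀ i : Fin k, R (t i.castSucc) (t i.succ)

namespace HasSubdivision

section Preorder

variable [Preorder α] {R : α → α → Prop} {a b c : α}

theorem refl (a : α) : HasSubdivision R a a :=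
  ⟨0, fun _ => a, rfl, rfl, monotone_const, fun i => i.elim0⟩

theorem snoc (h : HasSubdivision R a b) (hbc : b ≤ c) (hR : R b c) : HasSubdivision R a c := by
  obtain ⟨k, t, ht₀, htk, ht, hR'⟩ := h
  refine ⟨k + 1, Fin.snoc t c, by simpa using ht₀, by simp, ?_, fun i => ?_⟩
  · refine Fin.monotone_iff_le_succ.2 fun i => ?_
    cases i using Fin.lastCases with
    | last => simpa [htk] using hbc
    | cast i =>
      rw [Fin.succ_castSucc, Fin.snoc_castSucc, Fin.snoc_castSucc]
      exact ht (Fin.castSucc_le_succ i)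
  · cases i using Fin.lastCases with
    | last => simpa [htk] using hR
    | cast i =>
      rw [Fin.succ_castSucc, Fin.snoc_castSucc, Fin.snoc_castSucc]
      exact hR' i

end Preorder

variable [ConditionallyCompleteLinearOrder α] [TopologicalSpace α] [OrderTopology α]
  [DenselyOrdered α] {R : α → α → Prop} {a b : α}

theorem of_forall_eventually (hab : a ≤ b)
    (hR : ∀ x ∈ Icc a b, (∀ᶠ p in 𝓝[<] x, R p x) ∧ ∀ᶠ q in 𝓝[>] x, R x q) :
    HasSubdivision R a b := by
  set S := {y ∈ Icc a b | HasSubdivision R a y}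
  have haS : a ∈ S := ⟨⟨le_rfl, hab⟩, refl a⟩
  obtain ⟨C, hC⟩ : ∃ C, IsLUB S C := ⟨sSup S, isLUB_csSup ⟨a, haS⟩ ⟨b, fun y hy => hy.1.2⟩⟩
  have hCab : C ∈ Icc a b := ⟨hC.1 haS, hC.2 fun y hy => hy.1.2⟩
  obtain ⟨hleft, hright⟩ := hR C hCab
  have hCS : HasSubdivision R a C := by
    have hleft' : ∀ᶠ p in 𝓝[≤] C, p = C ∨ R p C := by
      rw [eventually_nhdsWithin_iff] at hleft ⊢
      filter_upwards [hleft] with p hp hpC using hpC.eq_or_lt.imp id fun h => hp h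
    obtain ⟨x, hxS, rfl | hxC⟩ := ((hC.frequently_mem ⟨a, haS⟩).and_eventually hleft').exists
    exacts [hxS.2, hxS.2.snoc (hC.1 hxS) hxC]
  obtain rfl | hCb := hCab.2.eq_or_lt
  · exact hCS
  have := nhdsGT_neBot_of_exists_gt ⟨b, hCb⟩
  obtain ⟨y, hRy, hCy, hyb⟩ := (hright.and (Ioc_mem_nhdsGT hCb)).exists
  exact absurd (hC.1 ⟨⟨hCab.1.trans hCy.le, hyb⟩, hCS.snoc hCy.le hRy⟩) (not_le.2 hCy)

end HasSubdivision

end Subdivision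

theorem val_locally_lipschitz_piecewise_analytic_general
    (n : ℕ)
    (V : Finset (Fin n → ℝ)) (hV : V.Nonempty)
    (c : ℝ → (Fin n → ℝ))
    (hc : ∃ U : Set ℝ, IsOpen U ∧ Set.Ioo (0 : ℝ) 1 ⊆ U ∧
      ∀ i, AnalyticOnNhd ℝ (fun ε => c ε i) U)
    (h : (Fin n → ℝ) → ℝ → ℝ)
    (hh : ∀ v ε, h v ε = ∑ i, c ε i * v i)
    (val : ℝ → ℝ) (hval : ∀ ε, val ε = V.inf' hV (fun v => h v ε)) :
    (∀ x ∈ Set.Ioo (0 : ℝ) 1, ∃ K : NNReal, ∃ s ∈ nhds x, LipschitzOnWith K val s) ∧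
    (∀ a b : ℝ, 0 < a → a ≤ b → b < 1 →
      ∃ (k : ℕ) (t : Fin (k + 1) → ℝ) (w : Fin k → (Fin n → ℝ)),
        t 0 = a ∧ t (Fin.last k) = b ∧ Monotone t ∧
        ∀ i : Fin k, w i ∈ V ∧
          ∀ ε ∈ Set.Icc (t i.castSucc) (t i.succ), val ε = h (w i) ε) := by
  obtain ⟨U, -, hU, hc⟩ := hc
  obtain rfl : val = fun ε => V.inf' hV (h · ε) := funext hval
  have hF : ∀ x ∈ Ioo (0 : ℝ) 1, ∀ v ∈ V, AnalyticAt ℝ (h v) x := fun x hx v _ => by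
    rw [funext (hh v)]
    exact Finset.analyticAt_fun_sum _ fun i _ => (hc i x (hU hx)).mul analyticAt_const
  refine ⟨fun x hx => exists_lipschitzOnWith_finset_inf' hV fun v hv =>
    (hF x hx v hv).contDiffAt.exists_lipschitzOnWith, fun a b ha hab hb => ?_⟩
  obtain ⟨k, t, ht₀, htk, ht, hpieces⟩ := HasSubdivision.of_forall_eventually hab fun x hx =>
    have hx' : x ∈ Ioo (0 : ℝ) 1 := ⟨ha.trans_le hx.1, hx.2.trans_lt hb⟩
    ⟨eventually_nhdsLT_exists_forall_Icc_inf'_eq hV (hF x hx'),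
      eventually_nhdsGT_exists_forall_Icc_inf'_eq hV (hF x hx')⟩
  choose w hwV hw using hpieces
  exact ⟨k, t, w, ht₀, htk, ht, fun i => ⟨hwV i, hw i⟩⟩

theorem val_locally_lipschitz_piecewise_analytic
    (n : ℕ) (hn : 1 ≤ n)
    (V : Finset (Fin n → ℝ)) (hV : V.Nonempty)
    (c : ℝ → (Fin n → ℝ))
    (hc : ∃ U : Set ℝ, IsOpen U ∧ Set.Ioo (0 : ℝ) 1 ⊆ U ∧
      ∀ i, AnalyticOnNhd ℝ (fun ε => c ε i) U)
    (h : (Fin n → ℝ) → ℝ → ℝ)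
    (hh : ∀ v ε, h v ε = ∑ i, c ε i * v i)
    (val : ℝ → ℝ) (hval : ∀ ε, val ε = V.inf' hV (fun v => h v ε)) :
    (∀ x ∈ Set.Ioo (0 : ℝ) 1, ∃ K : NNReal, ∃ s ∈ nhds x, LipschitzOnWith K val s) ∧
    (∀ a b : ℝ, 0 < a → a ≤ b → b < 1 →
      ∃ (k : ℕ) (t : Fin (k + 1) → ℝ) (w : Fin k → (Fin n → ℝ)),
        t 0 = a ∧ t (Fin.last k) = b ∧ Monotone t ∧
        ∀ i : Fin k, w i ∈ V ∧
          ∀ ε ∈ Set.Icc (t i.castSucc) (t i.succ), val ε = h (w i) ε) :=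
  val_locally_lipschitz_piecewise_analytic_general n V hV c hc h hh val hval
end

section
/- Suppose there is δ > 0 such that each coordinate of c : ℝ → ℝⁿ is real-analytic on an open set containing (−δ, 1+δ). Then the optimal value function val has finitely many analytic pieces on [0,1]: there exist finitely many points 0 = t₀ ≤ t₁ ≤ ⋯ ≤ t_k = 1 and vertices v₁, …, v_k ∈ V such that val(ε) = h_{v_i}(ε) for all ε ∈ [t_{i−1}, t_i] and each i. -/
/-!
Any two of the finitely many analytic functions `h v` either agree on a connected neighbourhood
of `[0, 1]` or, by the identity principle, cross only finitely often in the compact set `[0, 1]`.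
Cutting `[0, 1]` at all these crossings, no two functions change order inside a piece (by the
intermediate value theorem), so a vertex that is optimal at an interior point of a piece is
optimal on the whole closed piece.
-/

open Filter Set

section Analytic

variable {𝕜 E ι : Type*} [NontriviallyNormedField 𝕜] [NormedAddCommGroup E]
  [NormedSpace 𝕜 E] {U K : Set 𝕜}

lemma AnalyticOnNhd.eqOn_or_finite_setOf_eq {f g : 𝕜 → E} (hf : AnalyticOnNhd 𝕜 f U)
    (hg : AnalyticOnNhd 𝕜 g U) (hU : IsPreconnected U) (hK : IsCompact K) (hKU : K ⊆ U) :
    EqOn f g U ∨ {x ∈ K | f x = g x}.Finite :=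
  (hf.eqOn_or_eventually_ne_of_preconnected hg hU).imp_right fun hne => by
    refine (hK.finite_sdiff_of_mem_codiscreteWithin (codiscreteWithin_mono hKU hne)).subset ?_
    exact fun x hx => ⟨hx.1, not_not.2 hx.2⟩

lemma AnalyticOnNhd.finite_setOf_crossing (V : Finset ι) {f : ι → 𝕜 → E}
    (hf : ∀ v ∈ V, AnalyticOnNhd 𝕜 (f v) U) (hU : IsPreconnected U) (hK : IsCompact K)
    (hKU : K ⊆ U) :
    {x ∈ K | ∃ u ∈ V, ∃ v ∈ V, ¬ EqOn (f u) (f v) U ∧ f u x = f v x}.Finite := by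
  refine (V.finite_toSet.biUnion fun u hu => V.finite_toSet.biUnion fun v hv =>
    (?_ : {x ∈ K | ¬ EqOn (f u) (f v) U ∧ f u x = f v x}.Finite)).subset ?_
  · rcases (hf u hu).eqOn_or_finite_setOf_eq (hf v hv) hU hK hKU with heq | hfin
    · simp [heq]
    · exact hfin.subset fun x hx => ⟨hx.1, hx.2.2⟩
  · rintro x ⟨hx, u, hu, v, hv, hne, heq⟩
    simp only [mem_iUnion]
    exact ⟨u, hu, v, hv, hx, hne, heq⟩

end Analytic

lemma exists_strictMono_partition_avoiding {α : Type*} [LinearOrder α] {Z : Set α}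
    (hZ : Z.Finite) {a b : α} (hab : a ≤ b) :
    ∃ (k : ℕ) (t : Fin (k + 1) → α), t 0 = a ∧ t (Fin.last k) = b ∧ StrictMono t ∧
      ∀ i : Fin k, ∀ z ∈ Z, z ∉ Ioo (t i.castSucc) (t i.succ) := by
  classical
  set F : Finset α := insert a (insert b (hZ.toFinset.filter (· ∈ Icc a b)))
  have hF : ∀ x ∈ F, x ∈ Icc a b := by
    simp only [F, Finset.mem_insert, Finset.mem_filter]
    rintro x (rfl | rfl | ⟨-, hx⟩)
    exacts [⟨le_rfl, hab⟩, ⟨hab, le_rfl⟩, hx]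
  have hk : F.card = F.card - 1 + 1 :=
    (Nat.succ_pred_eq_of_pos (Finset.card_pos.2 ⟨a, by simp [F]⟩)).symm
  set t := F.orderEmbOfFin hk
  have htF : ∀ j, t j ∈ Icc a b := fun j => hF _ (F.orderEmbOfFin_mem hk j)
  have hrange : ∀ x ∈ F, x ∈ range t := fun x hx => by rwa [Finset.range_orderEmbOfFin]
  refine ⟨F.card - 1, t, ?_, ?_, t.strictMono, ?_⟩
  · obtain ⟨j, hj⟩ := hrange a (by simp [F])
    exact le_antisymm (hj ▸ t.monotone (Fin.zero_le j)) (htF 0).1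
  · obtain ⟨j, hj⟩ := hrange b (by simp [F])
    exact le_antisymm (htF _).2 (hj ▸ t.monotone (Fin.le_last j))
  · rintro i z hz ⟨hlo, hhi⟩
    have hzF : z ∈ F := by
      have hzab : z ∈ Icc a b := ⟨(htF _).1.trans hlo.le, hhi.le.trans (htF _).2⟩
      simp [F, hZ.mem_toFinset.2 hz, hzab.1, hzab.2]
    obtain ⟨j, rfl⟩ := hrange z hzF
    have h₁ := Fin.lt_def.1 (t.lt_iff_lt.1 hlo)
    have h₂ := Fin.lt_def.1 (t.lt_iff_lt.1 hhi)
    simp only [Fin.val_castSucc, Fin.val_succ] at h₁ h₂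
    omega

section Order

variable {α : Type*} [ConditionallyCompleteLinearOrder α] [TopologicalSpace α] [OrderTopology α]
  [DenselyOrdered α] {a b : α}

lemma ContinuousOn.nonpos_of_neg_of_forall_ne_zero {f : α → ℝ} (hf : ContinuousOn f (Icc a b))
    {m : α} (hm : m ∈ Icc a b) (hfm : f m < 0) (hne : ∀ x ∈ Ioo a b, f x ≠ 0) {x : α}
    (hx : x ∈ Icc a b) : f x ≤ 0 := by
  by_contra! hfx
  obtain ⟨z, hz, hfz⟩ : ∃ z ∈ uIoo m x, f z = 0 := by
    rcases le_total m x with hmx | hxm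
    · obtain ⟨z, hz, hfz⟩ :=
        intermediate_value_Ioo hmx (hf.mono (Icc_subset_Icc hm.1 hx.2)) ⟨hfm, hfx⟩
      exact ⟨z, by simpa [uIoo_of_le hmx] using hz, hfz⟩
    · obtain ⟨z, hz, hfz⟩ :=
        intermediate_value_Ioo' hxm (hf.mono (Icc_subset_Icc hx.1 hm.2)) ⟨hfm, hfx⟩
      exact ⟨z, by simpa [uIoo_of_ge hxm] using hz, hfz⟩
  exact hne z (uIoo_subset_Ioo hm hx hz) hfz

lemma Finset.exists_mem_forall_inf'_eq_of_eqOn_or_ne {ι : Type*} (V : Finset ι)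
    (hV : V.Nonempty) {f : ι → α → ℝ} (hab : a < b)
    (hf : ∀ v ∈ V, ContinuousOn (f v) (Set.Icc a b))
    (hcross : ∀ u ∈ V, ∀ v ∈ V,
      EqOn (f u) (f v) (Set.Icc a b) ∨ ∀ x ∈ Set.Ioo a b, f u x ≠ f v x) :
    ∃ v ∈ V, ∀ x ∈ Set.Icc a b, V.inf' hV (f · x) = f v x := by
  obtain ⟨m, hm⟩ := _root_.exists_between hab
  obtain ⟨v, hv, hvm⟩ := V.exists_mem_eq_inf' hV (f · m)
  refine ⟨v, hv, fun x hx => le_antisymm (V.inf'_le _ hv) (V.le_inf' _ _ fun u hu => ?_)⟩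
  rcases hcross v hv u hu with heq | hne
  · exact (heq hx).le
  have hlt : f v m - f u m < 0 :=
    sub_neg.2 ((hvm ▸ V.inf'_le _ hu : f v m ≤ f u m).lt_of_ne (hne m hm))
  exact sub_nonpos.1 <| ((hf v hv).sub (hf u hu)).nonpos_of_neg_of_forall_ne_zero
    (Set.Ioo_subset_Icc_self hm) hlt (fun y hy => sub_ne_zero.2 (hne y hy)) hx

end Order

theorem val_finitely_many_analytic_pieces_general
    (n : ℕ)
    (V : Finset (Fin n → ℝ)) (hV : V.Nonempty)
    (c : ℝ → (Fin n → ℝ))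
    (hc : ∃ δ > (0 : ℝ), ∃ U : Set ℝ, IsOpen U ∧ Set.Ioo (-δ) (1 + δ) ⊆ U ∧
      ∀ i, AnalyticOnNhd ℝ (fun ε => c ε i) U)
    (h : (Fin n → ℝ) → ℝ → ℝ)
    (hh : ∀ v ε, h v ε = ∑ i, c ε i * v i)
    (val : ℝ → ℝ) (hval : ∀ ε, val ε = V.inf' hV (fun v => h v ε)) :
    ∃ (k : ℕ) (t : Fin (k + 1) → ℝ) (w : Fin k → (Fin n → ℝ)),
      t 0 = 0 ∧ t (Fin.last k) = 1 ∧ Monotone t ∧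
      ∀ i : Fin k, w i ∈ V ∧
        ∀ ε ∈ Set.Icc (t i.castSucc) (t i.succ), val ε = h (w i) ε := by
  obtain ⟨δ, hδ, U, -, hIU, hcU⟩ := hc
  have hI : Icc (0 : ℝ) 1 ⊆ Ioo (-δ) (1 + δ) := Icc_subset_Ioo (by linarith) (by linarith)
  have hana : ∀ v, AnalyticOnNhd ℝ (h v) (Ioo (-δ) (1 + δ)) := fun v => by
    rw [show h v = fun ε => ∑ i, c ε i * v i from funext (hh v)]
    exact Finset.analyticOnNhd_fun_sum _ fun i _ => ((hcU i).mono hIU).mul analyticOnNhd_const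
  obtain ⟨k, t, ht0, htk, htmono, htgap⟩ := exists_strictMono_partition_avoiding
    (AnalyticOnNhd.finite_setOf_crossing V (fun v _ => hana v) isPreconnected_Ioo isCompact_Icc hI)
    zero_le_one
  have hpiece : ∀ i : Fin k, Icc (t i.castSucc) (t i.succ) ⊆ Icc 0 1 := fun i =>
    Icc_subset_Icc (ht0 ▸ htmono.monotone (Fin.zero_le _))
      (htk ▸ htmono.monotone (Fin.le_last _))
  have hcross : ∀ i : Fin k, ∀ u ∈ V, ∀ v ∈ V,
      EqOn (h u) (h v) (Icc (t i.castSucc) (t i.succ)) ∨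
        ∀ x ∈ Ioo (t i.castSucc) (t i.succ), h u x ≠ h v x := by
    intro i u hu v hv
    by_cases heq : EqOn (h u) (h v) (Ioo (-δ) (1 + δ))
    · exact .inl (heq.mono ((hpiece i).trans hI))
    · exact .inr fun x hx hx_eq =>
        htgap i x ⟨hpiece i (Ioo_subset_Icc_self hx), u, hu, v, hv, heq, hx_eq⟩ hx
  choose w hwV hw using fun i : Fin k =>
    V.exists_mem_forall_inf'_eq_of_eqOn_or_ne hV (htmono i.castSucc_lt_succ)
      (fun v _ => (hana v).continuousOn.mono ((hpiece i).trans hI)) (hcross i)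
  exact ⟨k, t, w, ht0, htk, htmono.monotone,
    fun i => ⟨hwV i, fun ε hε => (hval ε).trans (hw i ε hε)⟩⟩

theorem val_finitely_many_analytic_pieces
    (n : ℕ) (hn : 1 ≤ n)
    (V : Finset (Fin n → ℝ)) (hV : V.Nonempty)
    (c : ℝ → (Fin n → ℝ))
    (hc : ∃ δ > (0 : ℝ), ∃ U : Set ℝ, IsOpen U ∧ Set.Ioo (-δ) (1 + δ) ⊆ U ∧
      ∀ i, AnalyticOnNhd ℝ (fun ε => c ε i) U)
    (h : (Fin n → ℝ) → ℝ → ℝ)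
    (hh : ∀ v ε, h v ε = ∑ i, c ε i * v i)
    (val : ℝ → ℝ) (hval : ∀ ε, val ε = V.inf' hV (fun v => h v ε)) :
    ∃ (k : ℕ) (t : Fin (k + 1) → ℝ) (w : Fin k → (Fin n → ℝ)),
      t 0 = 0 ∧ t (Fin.last k) = 1 ∧ Monotone t ∧
      ∀ i : Fin k, w i ∈ V ∧
        ∀ ε ∈ Set.Icc (t i.castSucc) (t i.succ), val ε = h (w i) ε :=
  val_finitely_many_analytic_pieces_general n V hV c hc h hh val hval
end

section
/- Let μ⁰, μ¹, ν⁰, ν¹ be probability mass functions on V, each with finite first moment, and let t ∈ [0,1]. Then W((1−t)·μ⁰ + t·μ¹, (1−t)·ν⁰ + t·ν¹) ≤ (1−t)·W(μ⁰, ν⁰) + t·W(μ¹, ν¹). Consequently, if x ≠ y are points of V and ε ↦ μₓ^ε and ε ↦ μ_y^ε are affine maps from [0,1] into probability mass functions with finite first moments (a time-affine random walk), then the discrete-time Ollivier–Ricci curvature ε ↦ Ric_ε(x,y) := 1 − W(μₓ^ε, μ_y^ε)/d(x,y) is a concave function of ε on [0,1]. -/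
open scoped ENNReal

variable {V : Type*}

/-- `d` is a metric on `V`. -/
def IsMetric (d : V → V → ℝ) : Prop :=
  (∀ a b, d a b = d b a) ∧ (∀ a b, d a b = 0 ↔ a = b) ∧
  (∀ a b c, d a c ≤ d a b + d b c)

/-- `q` is a coupling of the probability mass functions `μ` and `ν`. -/
def IsCoupling (μ ν : V → ℝ≥0∞) (q : V × V → ℝ≥0∞) : Prop :=
  (∀ a, ∑' b, q (a, b) = μ a) ∧ (∀ b, ∑' a, q (a, b) = ν b)

/-- The L¹-Wasserstein distance, computed in `[0,∞]`. -/
noncomputable def Wass (d : V → V → ℝ) (μ ν : V → ℝ≥0∞) : ℝ≥0∞ :=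
  ⨅ q : {q : V × V → ℝ≥0∞ // IsCoupling μ ν q},
    ∑' p : V × V, ENNReal.ofReal (d p.1 p.2) * q.1 p

/-- `μ` is a probability mass function on `V`. -/
def IsPMF (μ : V → ℝ≥0∞) : Prop := ∑' z, μ z = 1

/-- `μ` has finite first moment with respect to `d`. -/
def FiniteFirstMoment (d : V → V → ℝ) (μ : V → ℝ≥0∞) : Prop :=
  ∃ z₀ : V, ∑' z, μ z * ENNReal.ofReal (d z₀ z) ≠ ⊤

section Aux

variable {d : V → V → ℝ}

lemma IsMetric.nonneg (hd : IsMetric d) (a b : V) : 0 ≤ d a b := by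
  have h1 := hd.2.2 a b a
  have h2 : d a a = 0 := (hd.2.1 a a).mpr rfl
  have h3 := hd.1 b a
  linarith

lemma prod_coupling (μ ν : V → ℝ≥0∞) (hμ : IsPMF μ) (hν : IsPMF ν) :
    IsCoupling μ ν (fun p => μ p.1 * ν p.2) := by
  constructor
  · intro a; simp only; rw [ENNReal.tsum_mul_left, hν, mul_one]
  · intro b; simp only; rw [ENNReal.tsum_mul_right, hμ, one_mul]

lemma tsum_prod_mul (f g : V → ℝ≥0∞) :
    ∑' p : V × V, f p.1 * g p.2 = (∑' a, f a) * ∑' b, g b := by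
  rw [ENNReal.tsum_prod' (f := fun p => f p.1 * g p.2)]
  calc ∑' (a : V) (b : V), f a * g b = ∑' a : V, f a * ∑' b, g b := by
        simp [ENNReal.tsum_mul_left]
    _ = _ := ENNReal.tsum_mul_right

lemma ffm_any (hd : IsMetric d) {μ : V → ℝ≥0∞} (hμ : IsPMF μ)
    (h : FiniteFirstMoment d μ) (w : V) :
    ∑' z, μ z * ENNReal.ofReal (d w z) ≠ ⊤ := by
  obtain ⟨z₀, hz₀⟩ := h
  have hb : ∀ z, μ z * ENNReal.ofReal (d w z) ≤
      μ z * ENNReal.ofReal (d w z₀) + μ z * ENNReal.ofReal (d z₀ z) := by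
    intro z
    rw [← mul_add]
    refine mul_le_mul_right ?_ _
    calc ENNReal.ofReal (d w z) ≤ ENNReal.ofReal (d w z₀ + d z₀ z) :=
          ENNReal.ofReal_le_ofReal (hd.2.2 _ _ _)
      _ ≤ _ := ENNReal.ofReal_add_le
  have hle := ENNReal.tsum_le_tsum hb
  rw [ENNReal.tsum_add, ENNReal.tsum_mul_right, hμ, one_mul] at hle
  exact ne_top_of_le_ne_top (ENNReal.add_ne_top.2 ⟨ENNReal.ofReal_ne_top, hz₀⟩) hle

lemma wass_ne_top (hd : IsMetric d) {μ ν : V → ℝ≥0∞} (hμ : IsPMF μ) (hν : IsPMF ν)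
    (h1 : FiniteFirstMoment d μ) (h2 : FiniteFirstMoment d ν) :
    Wass d μ ν ≠ ⊤ := by
  obtain ⟨w, -⟩ := id h1
  have key : Wass d μ ν ≤ ∑' p : V × V, ENNReal.ofReal (d p.1 p.2) * (μ p.1 * ν p.2) :=
    iInf_le (fun q : {q : V × V → ℝ≥0∞ // IsCoupling μ ν q} =>
      ∑' p : V × V, ENNReal.ofReal (d p.1 p.2) * q.1 p)
      ⟨fun p => μ p.1 * ν p.2, prod_coupling μ ν hμ hν⟩
  have hb : ∀ p : V × V, ENNReal.ofReal (d p.1 p.2) * (μ p.1 * ν p.2) ≤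
      (μ p.1 * ENNReal.ofReal (d w p.1)) * ν p.2 +
      μ p.1 * (ν p.2 * ENNReal.ofReal (d w p.2)) := by
    rintro ⟨a, b⟩
    have ht : ENNReal.ofReal (d a b) ≤ ENNReal.ofReal (d w a) + ENNReal.ofReal (d w b) := by
      calc ENNReal.ofReal (d a b) ≤ ENNReal.ofReal (d a w + d w b) :=
            ENNReal.ofReal_le_ofReal (hd.2.2 _ _ _)
        _ ≤ ENNReal.ofReal (d a w) + ENNReal.ofReal (d w b) := ENNReal.ofReal_add_le
        _ = _ := by rw [hd.1 a w]
    calc ENNReal.ofReal (d a b) * (μ a * ν b)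
        ≤ (ENNReal.ofReal (d w a) + ENNReal.ofReal (d w b)) * (μ a * ν b) :=
          mul_le_mul_left ht _
      _ = (μ a * ENNReal.ofReal (d w a)) * ν b + μ a * (ν b * ENNReal.ofReal (d w b)) := by
          ring
  have hle := ENNReal.tsum_le_tsum hb
  rw [ENNReal.tsum_add] at hle
  have e1 : ∑' p : V × V, (μ p.1 * ENNReal.ofReal (d w p.1)) * ν p.2 =
      (∑' a, μ a * ENNReal.ofReal (d w a)) * ∑' b, ν b :=
    tsum_prod_mul (fun a => μ a * ENNReal.ofReal (d w a)) ν
  have e2 : ∑' p : V × V, μ p.1 * (ν p.2 * ENNReal.ofReal (d w p.2)) =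
      (∑' a, μ a) * ∑' b, ν b * ENNReal.ofReal (d w b) :=
    tsum_prod_mul μ (fun b => ν b * ENNReal.ofReal (d w b))
  rw [e1, e2, hν, hμ, mul_one, one_mul] at hle
  refine ne_top_of_le_ne_top (ENNReal.add_ne_top.2 ⟨ffm_any hd hμ h1 w, ffm_any hd hν h2 w⟩)
    (le_trans key hle)

lemma wass_convex (d : V → V → ℝ) {μ₀ μ₁ ν₀ ν₁ : V → ℝ≥0∞}
    (hμ₀ : IsPMF μ₀) (hμ₁ : IsPMF μ₁) (hν₀ : IsPMF ν₀) (hν₁ : IsPMF ν₁)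
    (c₀ c₁ : ℝ≥0∞) (hc₀ : c₀ ≠ ⊤) (hc₁ : c₁ ≠ ⊤) :
    Wass d (fun z => c₀ * μ₀ z + c₁ * μ₁ z) (fun z => c₀ * ν₀ z + c₁ * ν₁ z) ≤
      c₀ * Wass d μ₀ ν₀ + c₁ * Wass d μ₁ ν₁ := by
  have hne₀ : Nonempty {q : V × V → ℝ≥0∞ // IsCoupling μ₀ ν₀ q} :=
    ⟨⟨fun p => μ₀ p.1 * ν₀ p.2, prod_coupling μ₀ ν₀ hμ₀ hν₀⟩⟩
  have hne₁ : Nonempty {q : V × V → ℝ≥0∞ // IsCoupling μ₁ ν₁ q} :=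
    ⟨⟨fun p => μ₁ p.1 * ν₁ p.2, prod_coupling μ₁ ν₁ hμ₁ hν₁⟩⟩
  have key : ∀ (q₀ : {q : V × V → ℝ≥0∞ // IsCoupling μ₀ ν₀ q})
      (q₁ : {q : V × V → ℝ≥0∞ // IsCoupling μ₁ ν₁ q}),
      Wass d (fun z => c₀ * μ₀ z + c₁ * μ₁ z) (fun z => c₀ * ν₀ z + c₁ * ν₁ z) ≤
        c₀ * (∑' p : V × V, ENNReal.ofReal (d p.1 p.2) * q₀.1 p) +
        c₁ * (∑' p : V × V, ENNReal.ofReal (d p.1 p.2) * q₁.1 p) := by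
    intro q₀ q₁
    have hcoup : IsCoupling (fun z => c₀ * μ₀ z + c₁ * μ₁ z)
        (fun z => c₀ * ν₀ z + c₁ * ν₁ z) (fun p => c₀ * q₀.1 p + c₁ * q₁.1 p) := by
      constructor
      · intro a
        rw [ENNReal.tsum_add, ENNReal.tsum_mul_left, ENNReal.tsum_mul_left,
          q₀.2.1 a, q₁.2.1 a]
      · intro b
        rw [ENNReal.tsum_add, ENNReal.tsum_mul_left, ENNReal.tsum_mul_left,
          q₀.2.2 b, q₁.2.2 b]
    refine le_trans (iInf_le _ ⟨fun p => c₀ * q₀.1 p + c₁ * q₁.1 p, hcoup⟩) (le_of_eq ?_)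
    simp only
    calc ∑' p : V × V, ENNReal.ofReal (d p.1 p.2) * (c₀ * q₀.1 p + c₁ * q₁.1 p)
        = ∑' p : V × V, (c₀ * (ENNReal.ofReal (d p.1 p.2) * q₀.1 p) +
            c₁ * (ENNReal.ofReal (d p.1 p.2) * q₁.1 p)) := by
          apply tsum_congr; intro p; ring
      _ = _ := by rw [ENNReal.tsum_add, ENNReal.tsum_mul_left, ENNReal.tsum_mul_left]
  calc Wass d (fun z => c₀ * μ₀ z + c₁ * μ₁ z) (fun z => c₀ * ν₀ z + c₁ * ν₁ z)
      ≤ ⨅ (q₀ : {q : V × V → ℝ≥0∞ // IsCoupling μ₀ ν₀ q})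
          (q₁ : {q : V × V → ℝ≥0∞ // IsCoupling μ₁ ν₁ q}),
          (c₀ * (∑' p : V × V, ENNReal.ofReal (d p.1 p.2) * q₀.1 p) +
           c₁ * (∑' p : V × V, ENNReal.ofReal (d p.1 p.2) * q₁.1 p)) :=
        le_iInf fun q₀ => le_iInf fun q₁ => key q₀ q₁
    _ = c₀ * Wass d μ₀ ν₀ + c₁ * Wass d μ₁ ν₁ := by
        rw [Wass, Wass, ENNReal.mul_iInf (fun h => absurd h hc₀),
          ENNReal.mul_iInf (fun h => absurd h hc₁)]
        rw [ENNReal.iInf_add]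
        refine iInf_congr fun q₀ => ?_
        rw [ENNReal.add_iInf]

end Aux

theorem wasserstein_convexity_and_olric_concavity
    [Countable V] (d : V → V → ℝ) (hd : IsMetric d) :
    (∀ μ₀ μ₁ ν₀ ν₁ : V → ℝ≥0∞,
      IsPMF μ₀ → IsPMF μ₁ → IsPMF ν₀ → IsPMF ν₁ →
      FiniteFirstMoment d μ₀ → FiniteFirstMoment d μ₁ →
      FiniteFirstMoment d ν₀ → FiniteFirstMoment d ν₁ →
      ∀ t : ℝ, t ∈ Set.Icc (0 : ℝ) 1 →
        Wass d (fun z => ENNReal.ofReal (1 - t) * μ₀ z + ENNReal.ofReal t * μ₁ z)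
               (fun z => ENNReal.ofReal (1 - t) * ν₀ z + ENNReal.ofReal t * ν₁ z) ≤
          ENNReal.ofReal (1 - t) * Wass d μ₀ ν₀ + ENNReal.ofReal t * Wass d μ₁ ν₁) ∧
    (∀ (x y : V), x ≠ y → ∀ μx μy : ℝ → V → ℝ≥0∞,
      (∀ ε ∈ Set.Icc (0 : ℝ) 1,
        IsPMF (μx ε) ∧ FiniteFirstMoment d (μx ε) ∧
        IsPMF (μy ε) ∧ FiniteFirstMoment d (μy ε)) →
      (∀ ε₁ ∈ Set.Icc (0 : ℝ) 1, ∀ ε₂ ∈ Set.Icc (0 : ℝ) 1, ∀ s ∈ Set.Icc (0 : ℝ) 1,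
        μx ((1 - s) * ε₁ + s * ε₂) =
          fun z => ENNReal.ofReal (1 - s) * μx ε₁ z + ENNReal.ofReal s * μx ε₂ z) →
      (∀ ε₁ ∈ Set.Icc (0 : ℝ) 1, ∀ ε₂ ∈ Set.Icc (0 : ℝ) 1, ∀ s ∈ Set.Icc (0 : ℝ) 1,
        μy ((1 - s) * ε₁ + s * ε₂) =
          fun z => ENNReal.ofReal (1 - s) * μy ε₁ z + ENNReal.ofReal s * μy ε₂ z) →
      ConcaveOn ℝ (Set.Icc (0 : ℝ) 1)
        (fun ε => 1 - (Wass d (μx ε) (μy ε)).toReal / d x y)) := by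
  constructor
  · intro μ₀ μ₁ ν₀ ν₁ hμ₀ hμ₁ hν₀ hν₁ _ _ _ _ t _
    exact wass_convex d hμ₀ hμ₁ hν₀ hν₁ _ _ ENNReal.ofReal_ne_top ENNReal.ofReal_ne_top
  · intro x y hxy μx μy hreg haffx haffy
    have hD : 0 < d x y :=
      lt_of_le_of_ne (hd.nonneg x y) (fun h => hxy ((hd.2.1 x y).mp h.symm))
    refine ⟨convex_Icc 0 1, ?_⟩
    intro ε₁ hε₁ ε₂ hε₂ a b ha hb hab
    simp only [smul_eq_mul]
    have ha1 : a = 1 - b := by linarith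
    have hbmem : b ∈ Set.Icc (0 : ℝ) 1 := ⟨hb, by linarith⟩
    obtain ⟨hpx₁, hfx₁, hpy₁, hfy₁⟩ := hreg ε₁ hε₁
    obtain ⟨hpx₂, hfx₂, hpy₂, hfy₂⟩ := hreg ε₂ hε₂
    have hεpt : a * ε₁ + b * ε₂ = (1 - b) * ε₁ + b * ε₂ := by rw [ha1]
    have hx := haffx ε₁ hε₁ ε₂ hε₂ b hbmem
    have hy := haffy ε₁ hε₁ ε₂ hε₂ b hbmem
    have hW : Wass d (μx (a * ε₁ + b * ε₂)) (μy (a * ε₁ + b * ε₂)) ≤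
        ENNReal.ofReal (1 - b) * Wass d (μx ε₁) (μy ε₁) +
        ENNReal.ofReal b * Wass d (μx ε₂) (μy ε₂) := by
      rw [hεpt, hx, hy]
      exact wass_convex d hpx₁ hpx₂ hpy₁ hpy₂ _ _ ENNReal.ofReal_ne_top ENNReal.ofReal_ne_top
    have hW₁ : Wass d (μx ε₁) (μy ε₁) ≠ ⊤ := wass_ne_top hd hpx₁ hpy₁ hfx₁ hfy₁
    have hW₂ : Wass d (μx ε₂) (μy ε₂) ≠ ⊤ := wass_ne_top hd hpx₂ hpy₂ hfx₂ hfy₂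
    have hRHS : ENNReal.ofReal (1 - b) * Wass d (μx ε₁) (μy ε₁) +
        ENNReal.ofReal b * Wass d (μx ε₂) (μy ε₂) ≠ ⊤ :=
      ENNReal.add_ne_top.2 ⟨ENNReal.mul_ne_top ENNReal.ofReal_ne_top hW₁,
        ENNReal.mul_ne_top ENNReal.ofReal_ne_top hW₂⟩
    have hm : (Wass d (μx (a * ε₁ + b * ε₂)) (μy (a * ε₁ + b * ε₂))).toReal ≤
        (1 - b) * (Wass d (μx ε₁) (μy ε₁)).toReal +
        b * (Wass d (μx ε₂) (μy ε₂)).toReal := by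
      have := ENNReal.toReal_mono hRHS hW
      rwa [ENNReal.toReal_add (ENNReal.mul_ne_top ENNReal.ofReal_ne_top hW₁)
        (ENNReal.mul_ne_top ENNReal.ofReal_ne_top hW₂), ENNReal.toReal_mul,
        ENNReal.toReal_mul, ENNReal.toReal_ofReal (by linarith),
        ENNReal.toReal_ofReal hb] at this
    set t₁ := (Wass d (μx ε₁) (μy ε₁)).toReal
    set t₂ := (Wass d (μx ε₂) (μy ε₂)).toReal
    set tm := (Wass d (μx (a * ε₁ + b * ε₂)) (μy (a * ε₁ + b * ε₂))).toReal
    have e1 : ((1 - b) * t₁ + b * t₂) / d x y =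
        (1 - b) * (t₁ / d x y) + b * (t₂ / d x y) := by
      rw [add_div, mul_div_assoc, mul_div_assoc]
    rw [ha1]
    have hdiv' : tm / d x y ≤ (1 - b) * (t₁ / d x y) + b * (t₂ / d x y) := by
      rw [← e1]; exact div_le_div_of_nonneg_right hm hD.le
    nlinarith [hdiv']
end

section
/- Fix a finite type V and points x ≠ y of V. Then the function Ric(d, μₓ, μ_y) is locally Lipschitz jointly in its arguments: for every metric d₀ on V and zero-sum vectors μₓ⁰, μ_y⁰ : V → ℝ, there exist δ > 0 and K ≥ 0 such that for all metrics d, d' on V and zero-sum vectors μₓ, μ_y, μₓ', μ_y' whose sup-norm distances to (d₀, μₓ⁰, μ_y⁰) are less than δ, one has |Ric(d, μₓ, μ_y) − Ric(d', μₓ', μ_y')| ≤ K·(‖d − d'‖_∞ + ‖μₓ − μₓ'‖_∞ + ‖μ_y − μ_y'‖_∞). -/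
variable {V : Type*} [Fintype V]

/-- The continuous-time Ollivier–Ricci curvature via the limit-free formula. -/
noncomputable def Ric (x y : V) (d : V → V → ℝ) (μx μy : V → ℝ) : ℝ :=
  sInf {r | ∃ f : V → ℝ, (∀ a b, |f a - f b| ≤ d a b) ∧ f y - f x = d x y ∧
    r = ((∑ w, (f w - f x) * μx w) - (∑ w, (f w - f y) * μy w)) / d x y}

lemma aux_abs_max {a b c d t : ℝ} (h1 : |a - c| ≤ t) (h2 : |b - d| ≤ t) :
    |max a b - max c d| ≤ t := by
  rw [abs_le] at *
  rcases le_total a b with h|h <;> rcases le_total c d with h'|h' <;>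
    simp only [max_eq_left, max_eq_right, h, h'] <;> constructor <;> linarith

lemma aux_abs_min {a b c d t : ℝ} (h1 : |a - c| ≤ t) (h2 : |b - d| ≤ t) :
    |min a b - min c d| ≤ t := by
  rw [abs_le] at *
  rcases le_total a b with h|h <;> rcases le_total c d with h'|h' <;>
    simp only [min_eq_left, min_eq_right, h, h'] <;> constructor <;> linarith

lemma aux_sum_shift (f μ : V → ℝ) (c : ℝ) (h : ∑ w, μ w = 0) :
    ∑ w, (f w - c) * μ w = ∑ w, f w * μ w := by
  simp only [sub_mul, Finset.sum_sub_distrib, ← Finset.mul_sum, h, mul_zero, sub_zero]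

lemma aux_sum_bound (p q : V → ℝ) (P Q : ℝ) (hp : ∀ w, |p w| ≤ P) (hq : ∀ w, |q w| ≤ Q) :
    |∑ w, p w * q w| ≤ (Fintype.card V) * (P * Q) := by
  calc |∑ w, p w * q w| ≤ ∑ w, |p w * q w| := Finset.abs_sum_le_sum_abs _ _
    _ ≤ ∑ _w : V, P * Q := Finset.sum_le_sum fun w _ => by
        rw [abs_mul]
        exact mul_le_mul (hp w) (hq w) (abs_nonneg _) ((abs_nonneg _).trans (hp w))
    _ = (Fintype.card V) * (P * Q) := by simp [Finset.sum_const, Finset.card_univ]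

omit [Fintype V] in
lemma aux_metric_nonneg {d : V → V → ℝ} (hd : IsMetric d) (a b : V) : 0 ≤ d a b := by
  have h0 : d a a = 0 := (hd.2.1 a a).mpr rfl
  have ht := hd.2.2 a b a
  have hs := hd.1 a b
  linarith

lemma aux_sInf_le (S S' : Set ℝ) (c : ℝ) (hS : BddBelow S) (hS' : S'.Nonempty)
    (h : ∀ r' ∈ S', ∃ r ∈ S, r ≤ r' + c) : sInf S ≤ sInf S' + c := by
  rw [← sub_le_iff_le_add]
  apply le_csInf hS'
  intro b hb
  obtain ⟨r, hr, hrb⟩ := h b hb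
  have := csInf_le hS hr
  linarith

lemma aux_div_bound {A B D D' P Q m : ℝ} (hm : 0 < m) (hD : m ≤ D) (hD' : m ≤ D')
    (hAB : |A - B| ≤ P) (hB : |B| ≤ Q) :
    A / D ≤ B / D' + P / m + Q * |D - D'| / m ^ 2 := by
  have hD0 : (0:ℝ) < D := hm.trans_le hD
  have hD'0 : (0:ℝ) < D' := hm.trans_le hD'
  have hP : 0 ≤ P := (abs_nonneg _).trans hAB
  have hQ : 0 ≤ Q := (abs_nonneg _).trans hB
  have key : A / D = B / D' + (A - B) / D + B * (D' - D) / (D * D') := by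
    field_simp
    ring
  have e1 : (A - B) / D ≤ P / m :=
    div_le_div₀ hP ((le_abs_self _).trans hAB) hm hD
  have e2 : B * (D' - D) / (D * D') ≤ Q * |D - D'| / m ^ 2 := by
    apply div_le_div₀ (by positivity) ?_ (by positivity) ?_
    · calc B * (D' - D) ≤ |B * (D' - D)| := le_abs_self _
        _ = |B| * |D' - D| := abs_mul _ _
        _ ≤ Q * |D - D'| := by
            rw [abs_sub_comm]
            exact mul_le_mul_of_nonneg_right hB (abs_nonneg _)
    · nlinarith
  linarith

lemma aux_pi_abs (d d' : V → V → ℝ) (a b : V) : |d a b - d' a b| ≤ ‖d - d'‖ := by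
  calc |d a b - d' a b| = ‖(d - d') a b‖ := by simp
    _ ≤ ‖(d - d') a‖ := norm_le_pi_norm _ b
    _ ≤ ‖d - d'‖ := norm_le_pi_norm _ a

lemma aux_pi_abs1 (μ μ' : V → ℝ) (w : V) : |μ w - μ' w| ≤ ‖μ - μ'‖ := by
  calc |μ w - μ' w| = ‖(μ - μ') w‖ := by simp
    _ ≤ ‖μ - μ'‖ := norm_le_pi_norm _ w

lemma aux_pi_abs0 (d : V → V → ℝ) (a b : V) : |d a b| ≤ ‖d‖ := by
  calc |d a b| = ‖d a b‖ := rfl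
    _ ≤ ‖d a‖ := norm_le_pi_norm _ b
    _ ≤ ‖d‖ := norm_le_pi_norm _ a

lemma aux_pi_abs01 (μ : V → ℝ) (w : V) : |μ w| ≤ ‖μ‖ := norm_le_pi_norm μ w

set_option maxHeartbeats 2000000 in
lemma ric_le_aux (x y : V) (hxy : x ≠ y) (d d' : V → V → ℝ) (μx μy μx' μy' : V → ℝ)
    (hd : IsMetric d) (hd' : IsMetric d')
    (hx0 : ∑ w, μx w = 0) (hy0 : ∑ w, μy w = 0)
    (hx0' : ∑ w, μx' w = 0) (hy0' : ∑ w, μy' w = 0)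
    (m M Bμ : ℝ) (hm : 0 < m)
    (hdm : ∀ a b, a ≠ b → m ≤ d a b) (hdM : ∀ a b, d a b ≤ M)
    (hdm' : ∀ a b, a ≠ b → m ≤ d' a b) (hdM' : ∀ a b, d' a b ≤ M)
    (hBx : ∀ w, |μx w| ≤ Bμ) (hBy : ∀ w, |μy w| ≤ Bμ)
    (hBx' : ∀ w, |μx' w| ≤ Bμ) (hBy' : ∀ w, |μy' w| ≤ Bμ) :
    Ric x y d μx μy ≤ Ric x y d' μx' μy' +
      ((2 * (Fintype.card V) * (1 + 2 * M / m) * Bμ + (Fintype.card V) * M) / m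
        + 2 * (Fintype.card V) * (M * Bμ) / m ^ 2) *
      (‖d - d'‖ + ‖μx - μx'‖ + ‖μy - μy'‖) := by
  have hdxx : d x x = 0 := (hd.2.1 x x).mpr rfl
  have hdyy : d y y = 0 := (hd.2.1 y y).mpr rfl
  have hd'xx : d' x x = 0 := (hd'.2.1 x x).mpr rfl
  set n : ℝ := (Fintype.card V : ℝ) with hn_def
  have hn : (0:ℝ) ≤ n := Nat.cast_nonneg _
  set ε := ‖d - d'‖ with hε_def
  set ex := ‖μx - μx'‖ with hex_def
  set ey := ‖μy - μy'‖ with hey_def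
  have hε0 : 0 ≤ ε := norm_nonneg _
  have hex0 : 0 ≤ ex := norm_nonneg _
  have hey0 : 0 ≤ ey := norm_nonneg _
  have habs : ∀ a b, |d a b - d' a b| ≤ ε := fun a b => aux_pi_abs d d' a b
  have habsx : ∀ w, |μx w - μx' w| ≤ ex := fun w => aux_pi_abs1 μx μx' w
  have habsy : ∀ w, |μy w - μy' w| ≤ ey := fun w => aux_pi_abs1 μy μy' w
  have hD : m ≤ d x y := hdm x y hxy
  have hD' : m ≤ d' x y := hdm' x y hxy
  have hD0 : 0 < d x y := hm.trans_le hD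
  have hD'0 : 0 < d' x y := hm.trans_le hD'
  have hM : 0 < M := hm.trans_le (hD.trans (hdM x y))
  have hBμ : 0 ≤ Bμ := (abs_nonneg _).trans (hBx x)
  rw [Ric, Ric]
  apply aux_sInf_le
  · -- BddBelow
    refine ⟨-(2 * (n * (M * Bμ)) / m), ?_⟩
    rintro r ⟨f, hf, hfy, rfl⟩
    have h1 : |∑ w, (f w - f x) * μx w| ≤ n * (M * Bμ) :=
      aux_sum_bound _ _ M Bμ (fun w => (hf w x).trans (hdM w x)) hBx
    have h2 : |∑ w, (f w - f y) * μy w| ≤ n * (M * Bμ) :=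
      aux_sum_bound _ _ M Bμ (fun w => (hf w y).trans (hdM w y)) hBy
    have hnum : -(2 * (n * (M * Bμ))) ≤
        (∑ w, (f w - f x) * μx w) - (∑ w, (f w - f y) * μy w) := by
      have := abs_le.mp h1
      have := abs_le.mp h2
      linarith
    have hk : 0 ≤ 2 * (n * (M * Bμ)) := by positivity
    have step1 : -(2 * (n * (M * Bμ))) / m ≤ -(2 * (n * (M * Bμ))) / d x y := by
      rw [div_le_div_iff₀ hm hD0]
      nlinarith
    have step2 : -(2 * (n * (M * Bμ))) / d x y ≤
        ((∑ w, (f w - f x) * μx w) - (∑ w, (f w - f y) * μy w)) / d x y :=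
      (div_le_div_iff_of_pos_right hD0).mpr hnum
    have : -(2 * (n * (M * Bμ)) / m) = -(2 * (n * (M * Bμ))) / m := by ring
    linarith
  · -- nonemptiness of the primed feasible set
    refine ⟨_, ⟨fun w => d' x w, fun a b => ?_, by simp [hd'xx], rfl⟩⟩
    show |d' x a - d' x b| ≤ d' a b
    rw [abs_le]
    constructor
    · have h1 := hd'.2.2 x a b
      linarith
    · have h1 := hd'.2.2 x b a
      have h2 := hd'.1 b a
      linarith
  · -- main construction
    rintro r' ⟨f, hf, hfy, rfl⟩
    set lam : ℝ := 1 + ε / m with hlam_def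
    have hlam1 : 1 ≤ lam := by
      have : 0 ≤ ε / m := div_nonneg hε0 hm.le
      simp only [hlam_def]; linarith
    have hlam0 : 0 < lam := lt_of_lt_of_le one_pos hlam1
    set F : V → ℝ := fun w => f w - f x with hF_def
    have hFM : ∀ w, |F w| ≤ M := fun w => (hf w x).trans (hdM' w x)
    have hFlip : ∀ a b, |F a - F b| ≤ d' a b := by
      intro a b
      have : F a - F b = f a - f b := by simp only [hF_def]; ring
      rw [this]; exact hf a b
    set h : V → ℝ := fun w => F w / lam with hh_def
    have hhlip : ∀ a b, |h a - h b| ≤ d a b := by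
      intro a b
      rcases eq_or_ne a b with rfl|hab
      · simp [(hd.2.1 a a).mpr rfl]
      · have h1 : |F a - F b| ≤ d' a b := hFlip a b
        have h2 : d' a b ≤ d a b + ε := by
          have := abs_le.mp (habs a b); linarith
        have h3 : m ≤ d a b := hdm a b hab
        have e : h a - h b = (F a - F b) / lam := by
          simp only [hh_def]; ring
        rw [e, abs_div, abs_of_pos hlam0, div_le_iff₀ hlam0]
        have key : ε ≤ d a b * (ε / m) := by
          calc ε = m * (ε / m) := by field_simp
            _ ≤ d a b * (ε / m) := mul_le_mul_of_nonneg_right h3 (div_nonneg hε0 hm.le)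
        have expand : d a b * lam = d a b + d a b * (ε / m) := by
          simp only [hlam_def]; ring
        calc |F a - F b| ≤ d' a b := h1
          _ ≤ d a b + ε := h2
          _ ≤ d a b + d a b * (ε / m) := by linarith
          _ = d a b * lam := expand.symm
    have hhx : h x = 0 := by simp [hh_def, hF_def]
    have hhabs : ∀ w, |h w| ≤ d x w := by
      intro w
      have := hhlip w x
      rw [hhx, sub_zero] at this
      rw [hd.1 x w]; exact this
    have hhy : h y = d' x y / lam := by
      simp only [hh_def, hF_def, hfy]
    set u : V → ℝ := fun w => d x y - d w y with hu_def
    set v : V → ℝ := fun w => d x w with hv_def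
    have hulip : ∀ a b, |u a - u b| ≤ d a b := by
      intro a b
      have e : u a - u b = d b y - d a y := by simp only [hu_def]; ring
      rw [e, abs_le]
      constructor
      · have := hd.2.2 a b y
        linarith
      · have h1 := hd.2.2 b a y
        have h2 := hd.1 b a
        linarith
    have hvlip : ∀ a b, |v a - v b| ≤ d a b := by
      intro a b
      rw [abs_le]
      constructor
      · have h1 := hd.2.2 x a b
        have h2 := hd.1 a b
        simp only [hv_def]; linarith
      · have h1 := hd.2.2 x b a
        have h2 := hd.1 b a
        simp only [hv_def]; linarith
    set g : V → ℝ := fun w => min (max (h w) (u w)) (v w) with hg_def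
    have hglip : ∀ a b, |g a - g b| ≤ d a b := fun a b =>
      aux_abs_min (aux_abs_max (hhlip a b) (hulip a b)) (hvlip a b)
    have hgx : g x = 0 := by
      simp [hg_def, hu_def, hv_def, hhx, hdxx]
    have hgy : g y = d x y := by
      have h1 : u y = d x y := by simp [hu_def, hdyy]
      have h2 : v y = d x y := rfl
      simp only [hg_def, h1, h2]
      exact min_eq_right (le_max_right _ _)
    have hgyx : g y - g x = d x y := by rw [hgy, hgx]; ring
    -- closeness of g to F
    have hhv : ∀ w, h w ≤ v w := fun w => (le_abs_self _).trans (hhabs w)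
    have hc1 : ∀ w, h w ≤ g w := fun w =>
      le_min (le_max_left _ _) (hhv w)
    have hclose0 : |d x y - d' x y / lam| ≤ ε + M * (ε / m) := by
      have h1 : |d x y - d' x y| ≤ ε := habs x y
      have hD'M : d' x y ≤ M := hdM' x y
      have hD'nn : 0 ≤ d' x y := hD'0.le
      have e : d x y - d' x y / lam = (d x y - d' x y) + d' x y * ((lam - 1) / lam) := by
        field_simp
        ring
      have h2 : |d' x y * ((lam - 1) / lam)| ≤ M * (ε / m) := by
        rw [abs_mul, abs_of_nonneg hD'nn,
          abs_of_nonneg (div_nonneg (by linarith : (0:ℝ) ≤ lam - 1) hlam0.le)]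
        apply mul_le_mul hD'M ?_ (div_nonneg (by linarith) hlam0.le) hM.le
        calc (lam - 1) / lam ≤ lam - 1 := by
              apply div_le_self (by linarith) hlam1
          _ = ε / m := by simp only [hlam_def]; ring
      calc |d x y - d' x y / lam| ≤ |d x y - d' x y| + |d' x y * ((lam - 1) / lam)| := by
            rw [e]; exact abs_add_le _ _
        _ ≤ ε + M * (ε / m) := add_le_add h1 h2
    have hc2 : ∀ w, g w ≤ h w + (ε + M * (ε / m)) := by
      intro w
      have hu_le : u w ≤ h w + (d x y - h y) := by
        have h1 : h y - h w ≤ d w y := by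
          have := abs_le.mp (hhlip y w)
          have h2 := hd.1 y w
          linarith
        simp only [hu_def]; linarith
      have hmax : max (h w) (u w) ≤ h w + max 0 (d x y - h y) := by
        apply max_le
        · linarith [le_max_left (0:ℝ) (d x y - h y)]
        · linarith [le_max_right (0:ℝ) (d x y - h y)]
      have hmax2 : max 0 (d x y - h y) ≤ ε + M * (ε / m) := by
        apply max_le ((abs_nonneg _).trans hclose0)
        rw [hhy]
        exact (le_abs_self _).trans hclose0
      calc g w ≤ max (h w) (u w) := min_le_left _ _
        _ ≤ h w + max 0 (d x y - h y) := hmax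
        _ ≤ h w + (ε + M * (ε / m)) := by linarith
    have hhF : ∀ w, |h w - F w| ≤ M * (ε / m) := by
      intro w
      have e : h w - F w = F w * ((1 - lam) / lam) := by
        simp only [hh_def]
        field_simp
      rw [e, abs_mul]
      have : |(1 - lam) / lam| = (lam - 1) / lam := by
        rw [abs_div, abs_of_pos hlam0, abs_of_nonpos (by linarith)]
        ring_nf
      rw [this]
      apply mul_le_mul (hFM w) ?_ (div_nonneg (by linarith) hlam0.le) hM.le
      calc (lam - 1) / lam ≤ lam - 1 := div_le_self (by linarith) hlam1
        _ = ε / m := by simp only [hlam_def]; ring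
    have hgF : ∀ w, |g w - F w| ≤ ε * (1 + 2 * M / m) := by
      intro w
      have h1 := hc1 w
      have h2 := hc2 w
      have h3 : |g w - h w| ≤ ε + M * (ε / m) := by
        rw [abs_le]
        constructor
        · have : 0 ≤ ε + M * (ε / m) := by positivity
          linarith
        · linarith
      calc |g w - F w| ≤ |g w - h w| + |h w - F w| := abs_sub_le _ _ _
        _ ≤ (ε + M * (ε / m)) + M * (ε / m) := add_le_add h3 (hhF w)
        _ = ε * (1 + 2 * M / m) := by ring
    have hgM : ∀ w, |g w| ≤ M := by
      intro w
      rw [abs_le]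
      constructor
      · have h1 := hc1 w
        have h2 := abs_le.mp (hhabs w)
        have h3 := hdM x w
        linarith
      · have h1 : g w ≤ v w := min_le_right _ _
        have h2 : v w ≤ M := hdM x w
        linarith
    -- assemble the estimate
    refine ⟨_, ⟨g, hglip, hgyx, rfl⟩, ?_⟩
    have e1 : ∑ w, (g w - g x) * μx w = ∑ w, g w * μx w := aux_sum_shift g μx _ hx0
    have e2 : ∑ w, (g w - g y) * μy w = ∑ w, g w * μy w := aux_sum_shift g μy _ hy0
    have e3 : ∑ w, (f w - f x) * μx' w = ∑ w, F w * μx' w := by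
      simp only [hF_def]
    have e4 : ∑ w, (f w - f y) * μy' w = ∑ w, F w * μy' w := by
      have : ∀ w, (f w - f y) * μy' w = (F w - F y) * μy' w := by
        intro w; simp only [hF_def]; ring_nf
      rw [Finset.sum_congr rfl (fun w _ => this w)]
      exact aux_sum_shift F μy' _ hy0'
    rw [e1, e2, e3, e4]
    set A := (∑ w, g w * μx w) - (∑ w, g w * μy w) with hA_def
    set B := (∑ w, F w * μx' w) - (∑ w, F w * μy' w) with hB_def
    have hABsum : |A - B| ≤ (2 * n * (1 + 2 * M / m) * Bμ + n * M) * (ε + ex + ey) := by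
      have t1 : |∑ w, (g w - F w) * μx w| ≤ n * ((ε * (1 + 2 * M / m)) * Bμ) :=
        aux_sum_bound _ _ _ _ hgF hBx
      have t2 : |∑ w, F w * (μx w - μx' w)| ≤ n * (M * ex) :=
        aux_sum_bound _ _ _ _ hFM habsx
      have t3 : |∑ w, (g w - F w) * μy w| ≤ n * ((ε * (1 + 2 * M / m)) * Bμ) :=
        aux_sum_bound _ _ _ _ hgF hBy
      have t4 : |∑ w, F w * (μy w - μy' w)| ≤ n * (M * ey) :=
        aux_sum_bound _ _ _ _ hFM habsy
      have eAB : A - B = (∑ w, (g w - F w) * μx w) + (∑ w, F w * (μx w - μx' w))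
          - ((∑ w, (g w - F w) * μy w) + (∑ w, F w * (μy w - μy' w))) := by
        simp only [hA_def, hB_def, ← Finset.sum_add_distrib, ← Finset.sum_sub_distrib]
        apply Finset.sum_congr rfl
        intros; ring
      have habs' : |A - B| ≤ 2 * (n * ((ε * (1 + 2 * M / m)) * Bμ)) + n * (M * ex) + n * (M * ey) := by
        rw [eAB]
        have := abs_le.mp t1
        have := abs_le.mp t2
        have := abs_le.mp t3
        have := abs_le.mp t4
        rw [abs_le]
        constructor <;> linarith
      have hcoef1 : 0 ≤ 2 * n * (1 + 2 * M / m) * Bμ := by positivity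
      have hcoef2 : 0 ≤ n * M := by positivity
      have b1 : 2 * (n * ((ε * (1 + 2 * M / m)) * Bμ)) ≤ (2 * n * (1 + 2 * M / m) * Bμ) * (ε + ex + ey) := by
        have : 2 * (n * ((ε * (1 + 2 * M / m)) * Bμ)) = (2 * n * (1 + 2 * M / m) * Bμ) * ε := by ring
        rw [this]
        apply mul_le_mul_of_nonneg_left (by linarith) hcoef1
      have b2 : n * (M * ex) + n * (M * ey) ≤ (n * M) * (ε + ex + ey) := by
        have : n * (M * ex) + n * (M * ey) = (n * M) * (ex + ey) := by ring
        rw [this]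
        apply mul_le_mul_of_nonneg_left (by linarith) hcoef2
      calc |A - B| ≤ 2 * (n * ((ε * (1 + 2 * M / m)) * Bμ)) + (n * (M * ex) + n * (M * ey)) := by
            linarith
        _ ≤ (2 * n * (1 + 2 * M / m) * Bμ) * (ε + ex + ey) + (n * M) * (ε + ex + ey) := add_le_add b1 b2
        _ = (2 * n * (1 + 2 * M / m) * Bμ + n * M) * (ε + ex + ey) := by ring
    have hBbd : |B| ≤ 2 * (n * (M * Bμ)) := by
      have t1 : |∑ w, F w * μx' w| ≤ n * (M * Bμ) := aux_sum_bound _ _ _ _ hFM hBx'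
      have t2 : |∑ w, F w * μy' w| ≤ n * (M * Bμ) := aux_sum_bound _ _ _ _ hFM hBy'
      have := abs_le.mp t1
      have := abs_le.mp t2
      rw [hB_def, abs_le]
      constructor <;> linarith
    have main := aux_div_bound hm hD hD' hABsum hBbd
    have hDD' : |d x y - d' x y| ≤ ε := habs x y
    have last : 2 * (n * (M * Bμ)) * |d x y - d' x y| / m ^ 2 ≤
        (2 * n * (M * Bμ) / m ^ 2) * (ε + ex + ey) := by
      have h1 : 2 * (n * (M * Bμ)) * |d x y - d' x y| ≤ 2 * (n * (M * Bμ)) * (ε + ex + ey) := by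
        apply mul_le_mul_of_nonneg_left ?_ (by positivity)
        linarith
      calc 2 * (n * (M * Bμ)) * |d x y - d' x y| / m ^ 2
          ≤ 2 * (n * (M * Bμ)) * (ε + ex + ey) / m ^ 2 := by
            exact (div_le_div_iff_of_pos_right (by positivity : (0:ℝ) < m ^ 2)).mpr h1
        _ = (2 * n * (M * Bμ) / m ^ 2) * (ε + ex + ey) := by ring
    have mid : ((2 * n * (1 + 2 * M / m) * Bμ + n * M) * (ε + ex + ey)) / m =
        ((2 * n * (1 + 2 * M / m) * Bμ + n * M) / m) * (ε + ex + ey) := by ring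
    calc A / d x y ≤ B / d' x y + ((2 * n * (1 + 2 * M / m) * Bμ + n * M) * (ε + ex + ey)) / m
          + 2 * (n * (M * Bμ)) * |d x y - d' x y| / m ^ 2 := main
      _ ≤ B / d' x y + ((2 * n * (1 + 2 * M / m) * Bμ + n * M) / m) * (ε + ex + ey)
          + (2 * n * (M * Bμ) / m ^ 2) * (ε + ex + ey) := by
            rw [mid]; linarith [last]
      _ = B / d' x y + ((2 * n * (1 + 2 * M / m) * Bμ + n * M) / m
          + 2 * n * (M * Bμ) / m ^ 2) * (ε + ex + ey) := by ring

theorem ric_locally_lipschitz (x y : V) (hxy : x ≠ y)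
    (d₀ : V → V → ℝ) (hd₀ : IsMetric d₀)
    (μx₀ μy₀ : V → ℝ) (h0x : ∑ w, μx₀ w = 0) (h0y : ∑ w, μy₀ w = 0) :
    ∃ δ > (0 : ℝ), ∃ K ≥ (0 : ℝ),
      ∀ (d d' : V → V → ℝ) (μx μy μx' μy' : V → ℝ),
        IsMetric d → IsMetric d' →
        ∑ w, μx w = 0 → ∑ w, μy w = 0 → ∑ w, μx' w = 0 → ∑ w, μy' w = 0 →
        ‖d - d₀‖ < δ → ‖μx - μx₀‖ < δ → ‖μy - μy₀‖ < δ →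
        ‖d' - d₀‖ < δ → ‖μx' - μx₀‖ < δ → ‖μy' - μy₀‖ < δ →
        |Ric x y d μx μy - Ric x y d' μx' μy'| ≤
          K * (‖d - d'‖ + ‖μx - μx'‖ + ‖μy - μy'‖) := by
  classical
  have hne : (Finset.univ.filter fun p : V × V => p.1 ≠ p.2).Nonempty :=
    ⟨(x, y), by simp [hxy]⟩
  set m₀ : ℝ := (Finset.univ.filter fun p : V × V => p.1 ≠ p.2).inf' hne
    (fun p => d₀ p.1 p.2) with hm₀_def
  have hm₀pos : 0 < m₀ := by
    rw [hm₀_def, Finset.lt_inf'_iff]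
    rintro ⟨a, b⟩ hab
    simp only [Finset.mem_filter, Finset.mem_univ, true_and] at hab
    rcases (aux_metric_nonneg hd₀ a b).lt_or_eq with h|h
    · exact h
    · exact absurd ((hd₀.2.1 a b).mp h.symm) hab
  have hm₀le : ∀ a b, a ≠ b → m₀ ≤ d₀ a b := by
    intro a b hab
    have hmem : ((a, b) : V × V) ∈ Finset.univ.filter (fun p : V × V => p.1 ≠ p.2) := by
      simp [hab]
    exact Finset.inf'_le _ hmem
  set δ : ℝ := min (m₀ / 2) 1 with hδ_def
  have hδ0 : 0 < δ := lt_min (by linarith) one_pos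
  have hδ1 : δ ≤ 1 := min_le_right _ _
  have hδm : δ ≤ m₀ / 2 := min_le_left _ _
  set m : ℝ := m₀ / 2 with hm_def
  have hm : 0 < m := by rw [hm_def]; linarith
  set M : ℝ := ‖d₀‖ + 1 with hM_def
  have hM0 : 0 ≤ M := by positivity
  set Bμ : ℝ := max ‖μx₀‖ ‖μy₀‖ + 1 with hBμ_def
  have hBμ0 : 0 ≤ Bμ := by positivity
  have hn : (0:ℝ) ≤ (Fintype.card V : ℝ) := Nat.cast_nonneg _
  have hq : (0:ℝ) ≤ 1 + 2 * M / m := by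
    have := div_nonneg (by linarith : (0:ℝ) ≤ 2 * M) hm.le
    linarith
  refine ⟨δ, hδ0,
    ((2 * (Fintype.card V) * (1 + 2 * M / m) * Bμ + (Fintype.card V) * M) / m
        + 2 * (Fintype.card V) * (M * Bμ) / m ^ 2), ?_, ?_⟩
  · apply add_nonneg
    · apply div_nonneg ?_ hm.le
      exact add_nonneg (mul_nonneg (mul_nonneg (by linarith) hq) hBμ0) (mul_nonneg hn hM0)
    · apply div_nonneg ?_ (by positivity)
      exact mul_nonneg (by linarith) (mul_nonneg hM0 hBμ0)
  intro d d' μx μy μx' μy' hd hd' s1 s2 s3 s4 h1 h2 h3 h4 h5 h6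
  have hdm : ∀ a b, a ≠ b → m ≤ d a b := by
    intro a b hab
    have e1 := abs_le.mp (aux_pi_abs d d₀ a b)
    have e2 := hm₀le a b hab
    rw [hm_def]
    linarith
  have hdM : ∀ a b, d a b ≤ M := by
    intro a b
    have e1 := abs_le.mp (aux_pi_abs d d₀ a b)
    have e2 := abs_le.mp (aux_pi_abs0 d₀ a b)
    rw [hM_def]
    linarith
  have hdm' : ∀ a b, a ≠ b → m ≤ d' a b := by
    intro a b hab
    have e1 := abs_le.mp (aux_pi_abs d' d₀ a b)
    have e2 := hm₀le a b hab
    rw [hm_def]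
    linarith
  have hdM' : ∀ a b, d' a b ≤ M := by
    intro a b
    have e1 := abs_le.mp (aux_pi_abs d' d₀ a b)
    have e2 := abs_le.mp (aux_pi_abs0 d₀ a b)
    rw [hM_def]
    linarith
  have hBx : ∀ w, |μx w| ≤ Bμ := by
    intro w
    have e1 := abs_le.mp (aux_pi_abs1 μx μx₀ w)
    have e2 := abs_le.mp (aux_pi_abs01 μx₀ w)
    have e3 : ‖μx₀‖ ≤ max ‖μx₀‖ ‖μy₀‖ := le_max_left _ _
    rw [hBμ_def, abs_le]
    constructor <;> linarith
  have hBy : ∀ w, |μy w| ≤ Bμ := by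
    intro w
    have e1 := abs_le.mp (aux_pi_abs1 μy μy₀ w)
    have e2 := abs_le.mp (aux_pi_abs01 μy₀ w)
    have e3 : ‖μy₀‖ ≤ max ‖μx₀‖ ‖μy₀‖ := le_max_right _ _
    rw [hBμ_def, abs_le]
    constructor <;> linarith
  have hBx' : ∀ w, |μx' w| ≤ Bμ := by
    intro w
    have e1 := abs_le.mp (aux_pi_abs1 μx' μx₀ w)
    have e2 := abs_le.mp (aux_pi_abs01 μx₀ w)
    have e3 : ‖μx₀‖ ≤ max ‖μx₀‖ ‖μy₀‖ := le_max_left _ _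
    rw [hBμ_def, abs_le]
    constructor <;> linarith
  have hBy' : ∀ w, |μy' w| ≤ Bμ := by
    intro w
    have e1 := abs_le.mp (aux_pi_abs1 μy' μy₀ w)
    have e2 := abs_le.mp (aux_pi_abs01 μy₀ w)
    have e3 : ‖μy₀‖ ≤ max ‖μx₀‖ ‖μy₀‖ := le_max_right _ _
    rw [hBμ_def, abs_le]
    constructor <;> linarith
  have key1 := ric_le_aux x y hxy d d' μx μy μx' μy' hd hd' s1 s2 s3 s4
    m M Bμ hm hdm hdM hdm' hdM' hBx hBy hBx' hBy'
  have key2 := ric_le_aux x y hxy d' d μx' μy' μx μy hd' hd s3 s4 s1 s2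
    m M Bμ hm hdm' hdM' hdm hdM hBx' hBy' hBx hBy
  rw [norm_sub_rev d' d, norm_sub_rev μx' μx, norm_sub_rev μy' μy] at key2
  rw [abs_le]
  constructor <;> linarith
end
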